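/- Let k ≥ 1, n ≥ 1 and let A, B be sets of 2-element subsets of {1,…,n}. Every induced path P on 4k+3 vertices in G_{k,n}(A,B) contains all three of v_0, v_1 and w, contains exactly 4k vertices belonging to the cliques, and has v_0 and v_1 as its two endpoints (so w is an internal vertex of P, of degree 2 on P). -/

import Mathlib

/-!
The graph `G_{k,n}(A,B)` from the paper "Local certification of forbidden subgraphs".

Vertices: clique vertices `(b, ℓ, i)` where `b : Bool` is the side (false = superscript 0,
true = superscript 1), `ℓ : Fin (2*k)` is the (0-based) level, so `K^b_{ℓ+1}` in the paper's
1-based notation, and `i : Fin n` is the label inside the clique; plus three special vertices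
`Sum.inr 0 = v₀`, `Sum.inr 1 = v₁`, `Sum.inr 2 = w`.

A set `A` of 2-element subsets of `{1,…,n}` is encoded as `A : Set (Sym2 (Fin n))` all of whose
members are non-diagonal.
-/

/-- Vertex type of `G_{k,n}(A,B)`. -/
abbrev GknVert (k n : ℕ) := (Bool × Fin (2 * k) × Fin n) ⊕ Fin 3

/-- The edges of `G_{k,n}(A,B)`, given in one direction; the graph is obtained by
symmetrizing with `SimpleGraph.fromRel`. -/
def gknRel (k n : ℕ) (A B : Set (Sym2 (Fin n))) :
    GknVert k n → GknVert k n → Prop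
  | Sum.inl (b, l, i), Sum.inl (b', l', j) =>
      -- edges inside one clique
      (b = b' ∧ l = l' ∧ i ≠ j) ∨
      -- the bipartite graph `G_A` between `K^0_1` and `K^1_1`
      (b = false ∧ b' = true ∧ (l : ℕ) = 0 ∧ (l' : ℕ) = 0 ∧ (i = j ∨ s(i, j) ∉ A)) ∨
      -- the bipartite graph `G_B` between `K^0_{2k}` and `K^1_{2k}`
      (b = false ∧ b' = true ∧ (l : ℕ) = 2 * k - 1 ∧ (l' : ℕ) = 2 * k - 1 ∧
        (i = j ∨ s(i, j) ∉ B)) ∨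
      -- the perfect matchings between `K^0_ℓ` and `K^1_ℓ` for `2 ≤ ℓ ≤ 2k-1` (1-based)
      (b ≠ b' ∧ l = l' ∧ 1 ≤ (l : ℕ) ∧ (l : ℕ) ≤ 2 * k - 2 ∧ i = j) ∨
      -- the antimatchings between consecutive levels (all four pairs of cliques)
      ((l' : ℕ) = (l : ℕ) + 1 ∧ i ≠ j)
  | Sum.inl (b, l, _), Sum.inr s =>
      -- `v₀` is complete to `K^0_1`, `v₁` is complete to `K^1_1`,
      -- `w` is complete to `K^0_{2k} ∪ K^1_{2k}`
      (s = 0 ∧ b = false ∧ (l : ℕ) = 0) ∨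
      (s = 1 ∧ b = true ∧ (l : ℕ) = 0) ∨
      (s = 2 ∧ (l : ℕ) = 2 * k - 1)
  | Sum.inr _, Sum.inl _ => False
  | Sum.inr _, Sum.inr _ => False

/-- The graph `G_{k,n}(A,B)`. -/
def Gkn (k n : ℕ) (A B : Set (Sym2 (Fin n))) : SimpleGraph (GknVert k n) :=
  SimpleGraph.fromRel (gknRel k n A B)

set_option linter.unusedVariables false
set_option maxHeartbeats 1000000

private lemma gkn_pige3 {a b c : ℕ} (ha : a < 2) (hb : b < 2) (hc : c < 2) :
    a = b ∨ a = c ∨ b = c := by omega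
private lemma gkn_pick {a b c : ℕ} (hc : c < 2) (ha : a < 2) (hb : b < 2)
    (hab : a ≠ b) : c = a ∨ c = b := by omega
private lemma gkn_two {a : ℕ} (h : a < 2) : a = 0 ∨ a = 1 := by omega
private lemma gkn_ne01 {a b : ℕ} (ha : a = 0) (hb : b = 1) : a ≠ b := by omega
private lemma gkn_ne10 {a b : ℕ} (ha : a = 1) (hb : b = 0) : a ≠ b := by omega
private lemma gkn_csymm {i j x y : ℕ} (h : i = j ∨ (x + 1 = y ∨ y + 1 = x)) :
    j = i ∨ (y + 1 = x ∨ x + 1 = y) := h.imp Eq.symm Or.symm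
private lemma gkn_tri {a b c : ℕ} (nab : a ≠ b) (nac : a ≠ c) (nbc : b ≠ c)
    (dab : a + 1 = b ∨ b + 1 = a) (dac : a + 1 = c ∨ c + 1 = a)
    (dbc : b + 1 = c ∨ c + 1 = b) : False := by omega
private lemma gkn_deg3 {x a b c : ℕ} (nab : a ≠ b) (nac : a ≠ c) (nbc : b ≠ c)
    (da : a + 1 = x ∨ x + 1 = a) (db : b + 1 = x ∨ x + 1 = b)
    (dc : c + 1 = x ∨ x + 1 = c) : False := by omega
private lemma gkn_cyc4 {a b c d : ℕ} (nac : a ≠ c) (nbd : b ≠ d)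
    (d1 : a + 1 = b ∨ b + 1 = a) (d2 : b + 1 = c ∨ c + 1 = b)
    (d3 : c + 1 = d ∨ d + 1 = c) (d4 : d + 1 = a ∨ a + 1 = d) : False := by omega
private lemma gkn_cyc5 {a b c d e : ℕ}
    (d1 : a + 1 = b ∨ b + 1 = a) (d2 : b + 1 = c ∨ c + 1 = b)
    (d3 : c + 1 = d ∨ d + 1 = c) (d4 : d + 1 = e ∨ e + 1 = d)
    (d5 : e + 1 = a ∨ a + 1 = e) : False := by omega

private lemma gkn_sub5 (s1 s2 s3 s4 s5 t1 t2 t3 t4 t5 : ℕ)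
    (hs1 : s1 < 2) (hs2 : s2 < 2) (hs3 : s3 < 2) (hs4 : s4 < 2) (hs5 : s5 < 2)
    (ne12 : t1 ≠ t2) (ne13 : t1 ≠ t3) (ne14 : t1 ≠ t4) (ne15 : t1 ≠ t5) (ne23 : t2 ≠ t3) (ne24 : t2 ≠ t4) (ne25 : t2 ≠ t5) (ne34 : t3 ≠ t4) (ne35 : t3 ≠ t5) (ne45 : t4 ≠ t5)
    (w12 : s1 = s2 → (t1 + 1 = t2 ∨ t2 + 1 = t1))
    (w13 : s1 = s3 → (t1 + 1 = t3 ∨ t3 + 1 = t1))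
    (w14 : s1 = s4 → (t1 + 1 = t4 ∨ t4 + 1 = t1))
    (w15 : s1 = s5 → (t1 + 1 = t5 ∨ t5 + 1 = t1))
    (w23 : s2 = s3 → (t2 + 1 = t3 ∨ t3 + 1 = t2))
    (w24 : s2 = s4 → (t2 + 1 = t4 ∨ t4 + 1 = t2))
    (w25 : s2 = s5 → (t2 + 1 = t5 ∨ t5 + 1 = t2))
    (w34 : s3 = s4 → (t3 + 1 = t4 ∨ t4 + 1 = t3))
    (w35 : s3 = s5 → (t3 + 1 = t5 ∨ t5 + 1 = t3))
    (w45 : s4 = s5 → (t4 + 1 = t5 ∨ t5 + 1 = t4))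
    : False := by
  rcases gkn_pige3 hs1 hs2 hs3 with h1 | h1 | h1
  ·
    rcases gkn_pige3 hs1 hs3 hs4 with h2 | h2 | h2
    ·
      have dw12 : (t1 + 1 = t2 ∨ t2 + 1 = t1) := w12 h1.symm.symm
      have dw13 : (t1 + 1 = t3 ∨ t3 + 1 = t1) := w13 h2.symm.symm
      have dw23 : (t2 + 1 = t3 ∨ t3 + 1 = t2) := w23 (h1.symm.trans h2.symm.symm)
      exact gkn_tri ne12 ne13 ne23 dw12 dw13 dw23
    ·
      have dw12 : (t1 + 1 = t2 ∨ t2 + 1 = t1) := w12 h1.symm.symm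
      have dw14 : (t1 + 1 = t4 ∨ t4 + 1 = t1) := w14 h2.symm.symm
      have dw24 : (t2 + 1 = t4 ∨ t4 + 1 = t2) := w24 (h1.symm.trans h2.symm.symm)
      exact gkn_tri ne12 ne14 ne24 dw12 dw14 dw24
    ·
      rcases gkn_pige3 hs1 hs3 hs5 with h3 | h3 | h3
      ·
        have dw12 : (t1 + 1 = t2 ∨ t2 + 1 = t1) := w12 h1.symm.symm
        have dw13 : (t1 + 1 = t3 ∨ t3 + 1 = t1) := w13 h3.symm.symm
        have dw23 : (t2 + 1 = t3 ∨ t3 + 1 = t2) := w23 (h1.symm.trans h3.symm.symm)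
        exact gkn_tri ne12 ne13 ne23 dw12 dw13 dw23
      ·
        have dw12 : (t1 + 1 = t2 ∨ t2 + 1 = t1) := w12 h1.symm.symm
        have dw15 : (t1 + 1 = t5 ∨ t5 + 1 = t1) := w15 h3.symm.symm
        have dw25 : (t2 + 1 = t5 ∨ t5 + 1 = t2) := w25 (h1.symm.trans h3.symm.symm)
        exact gkn_tri ne12 ne15 ne25 dw12 dw15 dw25
      ·
        have dw34 : (t3 + 1 = t4 ∨ t4 + 1 = t3) := w34 h2.symm.symm
        have dw35 : (t3 + 1 = t5 ∨ t5 + 1 = t3) := w35 h3.symm.symm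
        have dw45 : (t4 + 1 = t5 ∨ t5 + 1 = t4) := w45 (h2.symm.trans h3.symm.symm)
        exact gkn_tri ne34 ne35 ne45 dw34 dw35 dw45
  ·
    rcases gkn_pige3 hs1 hs2 hs4 with h2 | h2 | h2
    ·
      have dw12 : (t1 + 1 = t2 ∨ t2 + 1 = t1) := w12 h2.symm.symm
      have dw13 : (t1 + 1 = t3 ∨ t3 + 1 = t1) := w13 h1.symm.symm
      have dw23 : (t2 + 1 = t3 ∨ t3 + 1 = t2) := w23 (h2.symm.trans h1.symm.symm)
      exact gkn_tri ne12 ne13 ne23 dw12 dw13 dw23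
    ·
      have dw13 : (t1 + 1 = t3 ∨ t3 + 1 = t1) := w13 h1.symm.symm
      have dw14 : (t1 + 1 = t4 ∨ t4 + 1 = t1) := w14 h2.symm.symm
      have dw34 : (t3 + 1 = t4 ∨ t4 + 1 = t3) := w34 (h1.symm.trans h2.symm.symm)
      exact gkn_tri ne13 ne14 ne34 dw13 dw14 dw34
    ·
      rcases gkn_pige3 hs1 hs2 hs5 with h3 | h3 | h3
      ·
        have dw12 : (t1 + 1 = t2 ∨ t2 + 1 = t1) := w12 h3.symm.symm
        have dw13 : (t1 + 1 = t3 ∨ t3 + 1 = t1) := w13 h1.symm.symm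
        have dw23 : (t2 + 1 = t3 ∨ t3 + 1 = t2) := w23 (h3.symm.trans h1.symm.symm)
        exact gkn_tri ne12 ne13 ne23 dw12 dw13 dw23
      ·
        have dw13 : (t1 + 1 = t3 ∨ t3 + 1 = t1) := w13 h1.symm.symm
        have dw15 : (t1 + 1 = t5 ∨ t5 + 1 = t1) := w15 h3.symm.symm
        have dw35 : (t3 + 1 = t5 ∨ t5 + 1 = t3) := w35 (h1.symm.trans h3.symm.symm)
        exact gkn_tri ne13 ne15 ne35 dw13 dw15 dw35
      ·
        have dw24 : (t2 + 1 = t4 ∨ t4 + 1 = t2) := w24 h2.symm.symm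
        have dw25 : (t2 + 1 = t5 ∨ t5 + 1 = t2) := w25 h3.symm.symm
        have dw45 : (t4 + 1 = t5 ∨ t5 + 1 = t4) := w45 (h2.symm.trans h3.symm.symm)
        exact gkn_tri ne24 ne25 ne45 dw24 dw25 dw45
  ·
    rcases gkn_pige3 hs1 hs2 hs4 with h2 | h2 | h2
    ·
      have dw12 : (t1 + 1 = t2 ∨ t2 + 1 = t1) := w12 h2.symm.symm
      have dw13 : (t1 + 1 = t3 ∨ t3 + 1 = t1) := w13 (h1.symm.trans h2.symm).symm
      have dw23 : (t2 + 1 = t3 ∨ t3 + 1 = t2) := w23 (h2.symm.trans (h1.symm.trans h2.symm).symm)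
      exact gkn_tri ne12 ne13 ne23 dw12 dw13 dw23
    ·
      rcases gkn_pige3 hs1 hs2 hs5 with h3 | h3 | h3
      ·
        have dw12 : (t1 + 1 = t2 ∨ t2 + 1 = t1) := w12 h3.symm.symm
        have dw13 : (t1 + 1 = t3 ∨ t3 + 1 = t1) := w13 (h1.symm.trans h3.symm).symm
        have dw23 : (t2 + 1 = t3 ∨ t3 + 1 = t2) := w23 (h3.symm.trans (h1.symm.trans h3.symm).symm)
        exact gkn_tri ne12 ne13 ne23 dw12 dw13 dw23
      ·
        have dw14 : (t1 + 1 = t4 ∨ t4 + 1 = t1) := w14 h2.symm.symm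
        have dw15 : (t1 + 1 = t5 ∨ t5 + 1 = t1) := w15 h3.symm.symm
        have dw45 : (t4 + 1 = t5 ∨ t5 + 1 = t4) := w45 (h2.symm.trans h3.symm.symm)
        exact gkn_tri ne14 ne15 ne45 dw14 dw15 dw45
      ·
        have dw23 : (t2 + 1 = t3 ∨ t3 + 1 = t2) := w23 h1.symm.symm
        have dw25 : (t2 + 1 = t5 ∨ t5 + 1 = t2) := w25 h3.symm.symm
        have dw35 : (t3 + 1 = t5 ∨ t5 + 1 = t3) := w35 (h1.symm.trans h3.symm.symm)
        exact gkn_tri ne23 ne25 ne35 dw23 dw25 dw35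
    ·
      have dw23 : (t2 + 1 = t3 ∨ t3 + 1 = t2) := w23 h1.symm.symm
      have dw24 : (t2 + 1 = t4 ∨ t4 + 1 = t2) := w24 h2.symm.symm
      have dw34 : (t3 + 1 = t4 ∨ t4 + 1 = t3) := w34 (h1.symm.trans h2.symm.symm)
      exact gkn_tri ne23 ne24 ne34 dw23 dw24 dw34

private lemma gkn_sub4 (s1 s2 s3 s4 i1 i2 i3 i4 i5 t1 t2 t3 t4 t5 : ℕ)
    (hs1 : s1 < 2) (hs2 : s2 < 2) (hs3 : s3 < 2) (hs4 : s4 < 2)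
    (ne12 : t1 ≠ t2) (ne13 : t1 ≠ t3) (ne14 : t1 ≠ t4) (ne15 : t1 ≠ t5) (ne23 : t2 ≠ t3) (ne24 : t2 ≠ t4) (ne25 : t2 ≠ t5) (ne34 : t3 ≠ t4) (ne35 : t3 ≠ t5) (ne45 : t4 ≠ t5)
    (n12 : s1 = s2 → i1 ≠ i2)
    (n13 : s1 = s3 → i1 ≠ i3)
    (n14 : s1 = s4 → i1 ≠ i4)
    (n23 : s2 = s3 → i2 ≠ i3)
    (n24 : s2 = s4 → i2 ≠ i4)
    (n34 : s3 = s4 → i3 ≠ i4)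
    (w12 : s1 = s2 → (t1 + 1 = t2 ∨ t2 + 1 = t1))
    (w13 : s1 = s3 → (t1 + 1 = t3 ∨ t3 + 1 = t1))
    (w14 : s1 = s4 → (t1 + 1 = t4 ∨ t4 + 1 = t1))
    (w23 : s2 = s3 → (t2 + 1 = t3 ∨ t3 + 1 = t2))
    (w24 : s2 = s4 → (t2 + 1 = t4 ∨ t4 + 1 = t2))
    (w34 : s3 = s4 → (t3 + 1 = t4 ∨ t4 + 1 = t3))
    (m12 : i1 = i2 → (t1 + 1 = t2 ∨ t2 + 1 = t1))
    (m13 : i1 = i3 → (t1 + 1 = t3 ∨ t3 + 1 = t1))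
    (m14 : i1 = i4 → (t1 + 1 = t4 ∨ t4 + 1 = t1))
    (m23 : i2 = i3 → (t2 + 1 = t3 ∨ t3 + 1 = t2))
    (m24 : i2 = i4 → (t2 + 1 = t4 ∨ t4 + 1 = t2))
    (m34 : i3 = i4 → (t3 + 1 = t4 ∨ t4 + 1 = t3))
    (c1 : i1 = i5 ∨ (t1 + 1 = t5 ∨ t5 + 1 = t1))
    (c2 : i2 = i5 ∨ (t2 + 1 = t5 ∨ t5 + 1 = t2))
    (c3 : i3 = i5 ∨ (t3 + 1 = t5 ∨ t5 + 1 = t3))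
    (c4 : i4 = i5 ∨ (t4 + 1 = t5 ∨ t5 + 1 = t4))
    : False := by
  by_cases e1 : i1 = i5
  ·
    by_cases e2 : i2 = i5
    ·
      by_cases e3 : i3 = i5
      ·
        by_cases e4 : i4 = i5
        ·
          rcases gkn_pige3 hs1 hs2 hs3 with h | h | h
          · exact n12 h (e1.trans e2.symm)
          · exact n13 h (e1.trans e3.symm)
          · exact n23 h (e2.trans e3.symm)
        ·
          have d45 : (t4 + 1 = t5 ∨ t5 + 1 = t4) := c4.resolve_left e4
          rcases gkn_pige3 hs1 hs2 hs3 with h | h | h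
          · exact n12 h (e1.trans e2.symm)
          · exact n13 h (e1.trans e3.symm)
          · exact n23 h (e2.trans e3.symm)
      ·
        have d35 : (t3 + 1 = t5 ∨ t5 + 1 = t3) := c3.resolve_left e3
        by_cases e4 : i4 = i5
        ·
          rcases gkn_pige3 hs1 hs2 hs4 with h | h | h
          · exact n12 h (e1.trans e2.symm)
          · exact n14 h (e1.trans e4.symm)
          · exact n24 h (e2.trans e4.symm)
        ·
          have d45 : (t4 + 1 = t5 ∨ t5 + 1 = t4) := c4.resolve_left e4
          have ipq : i1 = i2 := e1.trans e2.symm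
          have spq : s1 ≠ s2 := fun h => n12 h ipq
          have dpq : (t1 + 1 = t2 ∨ t2 + 1 = t1) := m12 ipq
          rcases gkn_pick hs3 hs1 hs2 spq with h | h
          ·
            have dw13 : (t1 + 1 = t3 ∨ t3 + 1 = t1) := w13 h.symm
            rcases gkn_pick hs4 hs1 hs2 spq with h2 | h2
            ·
              have dw14 : (t1 + 1 = t4 ∨ t4 + 1 = t1) := w14 h2.symm
              exact gkn_deg3 ne23 ne24 ne34 dpq.symm dw13.symm dw14.symm
            ·
              have dw24 : (t2 + 1 = t4 ∨ t4 + 1 = t2) := w24 h2.symm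
              exact gkn_cyc5 dpq dw24 d45 d35.symm dw13.symm
          ·
            have dw23 : (t2 + 1 = t3 ∨ t3 + 1 = t2) := w23 h.symm
            rcases gkn_pick hs4 hs1 hs2 spq with h2 | h2
            ·
              have dw14 : (t1 + 1 = t4 ∨ t4 + 1 = t1) := w14 h2.symm
              exact gkn_cyc5 dpq dw23 d35 d45.symm dw14.symm
            ·
              have dw24 : (t2 + 1 = t4 ∨ t4 + 1 = t2) := w24 h2.symm
              exact gkn_deg3 ne13 ne14 ne34 dpq dw23.symm dw24.symm
    ·
      have d25 : (t2 + 1 = t5 ∨ t5 + 1 = t2) := c2.resolve_left e2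
      by_cases e3 : i3 = i5
      ·
        by_cases e4 : i4 = i5
        ·
          rcases gkn_pige3 hs1 hs3 hs4 with h | h | h
          · exact n13 h (e1.trans e3.symm)
          · exact n14 h (e1.trans e4.symm)
          · exact n34 h (e3.trans e4.symm)
        ·
          have d45 : (t4 + 1 = t5 ∨ t5 + 1 = t4) := c4.resolve_left e4
          have ipq : i1 = i3 := e1.trans e3.symm
          have spq : s1 ≠ s3 := fun h => n13 h ipq
          have dpq : (t1 + 1 = t3 ∨ t3 + 1 = t1) := m13 ipq
          rcases gkn_pick hs2 hs1 hs3 spq with h | h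
          ·
            have dw12 : (t1 + 1 = t2 ∨ t2 + 1 = t1) := w12 h.symm
            rcases gkn_pick hs4 hs1 hs3 spq with h2 | h2
            ·
              have dw14 : (t1 + 1 = t4 ∨ t4 + 1 = t1) := w14 h2.symm
              exact gkn_deg3 ne23 ne24 ne34 dw12.symm dpq.symm dw14.symm
            ·
              have dw34 : (t3 + 1 = t4 ∨ t4 + 1 = t3) := w34 h2.symm
              exact gkn_cyc5 dpq dw34 d45 d25.symm dw12.symm
          ·
            have dw23 : (t2 + 1 = t3 ∨ t3 + 1 = t2) := w23 h
            rcases gkn_pick hs4 hs1 hs3 spq with h2 | h2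
            ·
              have dw14 : (t1 + 1 = t4 ∨ t4 + 1 = t1) := w14 h2.symm
              exact gkn_cyc5 dpq dw23.symm d25 d45.symm dw14.symm
            ·
              have dw34 : (t3 + 1 = t4 ∨ t4 + 1 = t3) := w34 h2.symm
              exact gkn_deg3 ne12 ne14 ne24 dpq dw23 dw34.symm
      ·
        have d35 : (t3 + 1 = t5 ∨ t5 + 1 = t3) := c3.resolve_left e3
        by_cases e4 : i4 = i5
        ·
          have ipq : i1 = i4 := e1.trans e4.symm
          have spq : s1 ≠ s4 := fun h => n14 h ipq
          have dpq : (t1 + 1 = t4 ∨ t4 + 1 = t1) := m14 ipq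
          rcases gkn_pick hs2 hs1 hs4 spq with h | h
          ·
            have dw12 : (t1 + 1 = t2 ∨ t2 + 1 = t1) := w12 h.symm
            rcases gkn_pick hs3 hs1 hs4 spq with h2 | h2
            ·
              have dw13 : (t1 + 1 = t3 ∨ t3 + 1 = t1) := w13 h2.symm
              exact gkn_deg3 ne23 ne24 ne34 dw12.symm dw13.symm dpq.symm
            ·
              have dw34 : (t3 + 1 = t4 ∨ t4 + 1 = t3) := w34 h2
              exact gkn_cyc5 dpq dw34.symm d35 d25.symm dw12.symm
          ·
            have dw24 : (t2 + 1 = t4 ∨ t4 + 1 = t2) := w24 h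
            rcases gkn_pick hs3 hs1 hs4 spq with h2 | h2
            ·
              have dw13 : (t1 + 1 = t3 ∨ t3 + 1 = t1) := w13 h2.symm
              exact gkn_cyc5 dpq dw24.symm d25 d35.symm dw13.symm
            ·
              have dw34 : (t3 + 1 = t4 ∨ t4 + 1 = t3) := w34 h2
              exact gkn_deg3 ne12 ne13 ne23 dpq dw24 dw34
        ·
          have d45 : (t4 + 1 = t5 ∨ t5 + 1 = t4) := c4.resolve_left e4
          exact gkn_deg3 ne23 ne24 ne34 d25 d35 d45
  ·
    have d15 : (t1 + 1 = t5 ∨ t5 + 1 = t1) := c1.resolve_left e1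
    by_cases e2 : i2 = i5
    ·
      by_cases e3 : i3 = i5
      ·
        by_cases e4 : i4 = i5
        ·
          rcases gkn_pige3 hs2 hs3 hs4 with h | h | h
          · exact n23 h (e2.trans e3.symm)
          · exact n24 h (e2.trans e4.symm)
          · exact n34 h (e3.trans e4.symm)
        ·
          have d45 : (t4 + 1 = t5 ∨ t5 + 1 = t4) := c4.resolve_left e4
          have ipq : i2 = i3 := e2.trans e3.symm
          have spq : s2 ≠ s3 := fun h => n23 h ipq
          have dpq : (t2 + 1 = t3 ∨ t3 + 1 = t2) := m23 ipq
          rcases gkn_pick hs1 hs2 hs3 spq with h | h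
          ·
            have dw12 : (t1 + 1 = t2 ∨ t2 + 1 = t1) := w12 h
            rcases gkn_pick hs4 hs2 hs3 spq with h2 | h2
            ·
              have dw24 : (t2 + 1 = t4 ∨ t4 + 1 = t2) := w24 h2.symm
              exact gkn_deg3 ne13 ne14 ne34 dw12 dpq.symm dw24.symm
            ·
              have dw34 : (t3 + 1 = t4 ∨ t4 + 1 = t3) := w34 h2.symm
              exact gkn_cyc5 dpq dw34 d45 d15.symm dw12
          ·
            have dw13 : (t1 + 1 = t3 ∨ t3 + 1 = t1) := w13 h
            rcases gkn_pick hs4 hs2 hs3 spq with h2 | h2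
            ·
              have dw24 : (t2 + 1 = t4 ∨ t4 + 1 = t2) := w24 h2.symm
              exact gkn_cyc5 dpq dw13.symm d15 d45.symm dw24.symm
            ·
              have dw34 : (t3 + 1 = t4 ∨ t4 + 1 = t3) := w34 h2.symm
              exact gkn_deg3 ne12 ne14 ne24 dw13 dpq dw34.symm
      ·
        have d35 : (t3 + 1 = t5 ∨ t5 + 1 = t3) := c3.resolve_left e3
        by_cases e4 : i4 = i5
        ·
          have ipq : i2 = i4 := e2.trans e4.symm
          have spq : s2 ≠ s4 := fun h => n24 h ipq
          have dpq : (t2 + 1 = t4 ∨ t4 + 1 = t2) := m24 ipq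
          rcases gkn_pick hs1 hs2 hs4 spq with h | h
          ·
            have dw12 : (t1 + 1 = t2 ∨ t2 + 1 = t1) := w12 h
            rcases gkn_pick hs3 hs2 hs4 spq with h2 | h2
            ·
              have dw23 : (t2 + 1 = t3 ∨ t3 + 1 = t2) := w23 h2.symm
              exact gkn_deg3 ne13 ne14 ne34 dw12 dw23.symm dpq.symm
            ·
              have dw34 : (t3 + 1 = t4 ∨ t4 + 1 = t3) := w34 h2
              exact gkn_cyc5 dpq dw34.symm d35 d15.symm dw12
          ·
            have dw14 : (t1 + 1 = t4 ∨ t4 + 1 = t1) := w14 h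
            rcases gkn_pick hs3 hs2 hs4 spq with h2 | h2
            ·
              have dw23 : (t2 + 1 = t3 ∨ t3 + 1 = t2) := w23 h2.symm
              exact gkn_cyc5 dpq dw14.symm d15 d35.symm dw23.symm
            ·
              have dw34 : (t3 + 1 = t4 ∨ t4 + 1 = t3) := w34 h2
              exact gkn_deg3 ne12 ne13 ne23 dw14 dpq dw34
        ·
          have d45 : (t4 + 1 = t5 ∨ t5 + 1 = t4) := c4.resolve_left e4
          exact gkn_deg3 ne13 ne14 ne34 d15 d35 d45
    ·
      have d25 : (t2 + 1 = t5 ∨ t5 + 1 = t2) := c2.resolve_left e2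
      by_cases e3 : i3 = i5
      ·
        by_cases e4 : i4 = i5
        ·
          have ipq : i3 = i4 := e3.trans e4.symm
          have spq : s3 ≠ s4 := fun h => n34 h ipq
          have dpq : (t3 + 1 = t4 ∨ t4 + 1 = t3) := m34 ipq
          rcases gkn_pick hs1 hs3 hs4 spq with h | h
          ·
            have dw13 : (t1 + 1 = t3 ∨ t3 + 1 = t1) := w13 h
            rcases gkn_pick hs2 hs3 hs4 spq with h2 | h2
            ·
              have dw23 : (t2 + 1 = t3 ∨ t3 + 1 = t2) := w23 h2
              exact gkn_deg3 ne12 ne14 ne24 dw13 dw23 dpq.symm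
            ·
              have dw24 : (t2 + 1 = t4 ∨ t4 + 1 = t2) := w24 h2
              exact gkn_cyc5 dpq dw24.symm d25 d15.symm dw13
          ·
            have dw14 : (t1 + 1 = t4 ∨ t4 + 1 = t1) := w14 h
            rcases gkn_pick hs2 hs3 hs4 spq with h2 | h2
            ·
              have dw23 : (t2 + 1 = t3 ∨ t3 + 1 = t2) := w23 h2
              exact gkn_cyc5 dpq dw14.symm d15 d25.symm dw23
            ·
              have dw24 : (t2 + 1 = t4 ∨ t4 + 1 = t2) := w24 h2
              exact gkn_deg3 ne12 ne13 ne23 dw14 dw24 dpq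
        ·
          have d45 : (t4 + 1 = t5 ∨ t5 + 1 = t4) := c4.resolve_left e4
          exact gkn_deg3 ne12 ne14 ne24 d15 d25 d45
      ·
        have d35 : (t3 + 1 = t5 ∨ t5 + 1 = t3) := c3.resolve_left e3
        by_cases e4 : i4 = i5
        ·
          exact gkn_deg3 ne12 ne13 ne23 d15 d25 d35
        ·
          have d45 : (t4 + 1 = t5 ∨ t5 + 1 = t4) := c4.resolve_left e4
          exact gkn_deg3 ne12 ne13 ne23 d15 d25 d35

private lemma gkn_sub32 (s1 s2 s3 s4 s5 i1 i2 i3 i4 i5 t1 t2 t3 t4 t5 : ℕ)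
    (hs1 : s1 < 2) (hs2 : s2 < 2) (hs3 : s3 < 2) (hs4 : s4 < 2) (hs5 : s5 < 2)
    (ne12 : t1 ≠ t2) (ne13 : t1 ≠ t3) (ne14 : t1 ≠ t4) (ne15 : t1 ≠ t5) (ne23 : t2 ≠ t3) (ne24 : t2 ≠ t4) (ne25 : t2 ≠ t5) (ne34 : t3 ≠ t4) (ne35 : t3 ≠ t5) (ne45 : t4 ≠ t5)
    (n12 : s1 = s2 → i1 ≠ i2)
    (n13 : s1 = s3 → i1 ≠ i3)
    (n23 : s2 = s3 → i2 ≠ i3)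
    (n45 : s4 = s5 → i4 ≠ i5)
    (w12 : s1 = s2 → (t1 + 1 = t2 ∨ t2 + 1 = t1))
    (w13 : s1 = s3 → (t1 + 1 = t3 ∨ t3 + 1 = t1))
    (w23 : s2 = s3 → (t2 + 1 = t3 ∨ t3 + 1 = t2))
    (w45 : s4 = s5 → (t4 + 1 = t5 ∨ t5 + 1 = t4))
    (m12 : i1 = i2 → (t1 + 1 = t2 ∨ t2 + 1 = t1))
    (m13 : i1 = i3 → (t1 + 1 = t3 ∨ t3 + 1 = t1))
    (m23 : i2 = i3 → (t2 + 1 = t3 ∨ t3 + 1 = t2))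
    (m45 : i4 = i5 → (t4 + 1 = t5 ∨ t5 + 1 = t4))
    (c14 : i1 = i4 ∨ (t1 + 1 = t4 ∨ t4 + 1 = t1))
    (c15 : i1 = i5 ∨ (t1 + 1 = t5 ∨ t5 + 1 = t1))
    (c24 : i2 = i4 ∨ (t2 + 1 = t4 ∨ t4 + 1 = t2))
    (c25 : i2 = i5 ∨ (t2 + 1 = t5 ∨ t5 + 1 = t2))
    (c34 : i3 = i4 ∨ (t3 + 1 = t4 ∨ t4 + 1 = t3))
    (c35 : i3 = i5 ∨ (t3 + 1 = t5 ∨ t5 + 1 = t3))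
    : False := by
  by_cases e45 : i4 = i5
  ·
    have d45 : (t4 + 1 = t5 ∨ t5 + 1 = t4) := m45 e45
    by_cases e1 : i1 = i4
    ·
      by_cases e2 : i2 = i4
      ·
        by_cases e3 : i3 = i4
        ·
          rcases gkn_pige3 hs1 hs2 hs3 with h | h | h
          · exact n12 h (e1.trans e2.symm)
          · exact n13 h (e1.trans e3.symm)
          · exact n23 h (e2.trans e3.symm)
        ·
          have d34 : (t3 + 1 = t4 ∨ t4 + 1 = t3) := c34.resolve_left e3
          have d35 : (t3 + 1 = t5 ∨ t5 + 1 = t3) := c35.resolve_left (fun h => e3 (h.trans e45.symm))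
          have ipq : i1 = i2 := e1.trans e2.symm
          have spq : s1 ≠ s2 := fun h => n12 h ipq
          have dpq : (t1 + 1 = t2 ∨ t2 + 1 = t1) := m12 ipq
          rcases gkn_pick hs3 hs1 hs2 spq with h | h
          ·
            have dw13 : (t1 + 1 = t3 ∨ t3 + 1 = t1) := w13 h.symm
            exact gkn_deg3 ne14 ne15 ne45 dw13 d34.symm d35.symm
          ·
            have dw23 : (t2 + 1 = t3 ∨ t3 + 1 = t2) := w23 h.symm
            exact gkn_deg3 ne24 ne25 ne45 dw23 d34.symm d35.symm
      ·
        have d24 : (t2 + 1 = t4 ∨ t4 + 1 = t2) := c24.resolve_left e2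
        have d25 : (t2 + 1 = t5 ∨ t5 + 1 = t2) := c25.resolve_left (fun h => e2 (h.trans e45.symm))
        by_cases e3 : i3 = i4
        ·
          have ipq : i1 = i3 := e1.trans e3.symm
          have spq : s1 ≠ s3 := fun h => n13 h ipq
          have dpq : (t1 + 1 = t3 ∨ t3 + 1 = t1) := m13 ipq
          rcases gkn_pick hs2 hs1 hs3 spq with h | h
          ·
            have dw12 : (t1 + 1 = t2 ∨ t2 + 1 = t1) := w12 h.symm
            exact gkn_deg3 ne14 ne15 ne45 dw12 d24.symm d25.symm
          ·
            have dw23 : (t2 + 1 = t3 ∨ t3 + 1 = t2) := w23 h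
            exact gkn_deg3 ne34 ne35 ne45 dw23.symm d24.symm d25.symm
        ·
          have d34 : (t3 + 1 = t4 ∨ t4 + 1 = t3) := c34.resolve_left e3
          have d35 : (t3 + 1 = t5 ∨ t5 + 1 = t3) := c35.resolve_left (fun h => e3 (h.trans e45.symm))
          exact gkn_cyc4 ne23 ne45 d24 d34.symm d35 d25.symm
    ·
      have d14 : (t1 + 1 = t4 ∨ t4 + 1 = t1) := c14.resolve_left e1
      have d15 : (t1 + 1 = t5 ∨ t5 + 1 = t1) := c15.resolve_left (fun h => e1 (h.trans e45.symm))
      by_cases e2 : i2 = i4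
      ·
        by_cases e3 : i3 = i4
        ·
          have ipq : i2 = i3 := e2.trans e3.symm
          have spq : s2 ≠ s3 := fun h => n23 h ipq
          have dpq : (t2 + 1 = t3 ∨ t3 + 1 = t2) := m23 ipq
          rcases gkn_pick hs1 hs2 hs3 spq with h | h
          ·
            have dw12 : (t1 + 1 = t2 ∨ t2 + 1 = t1) := w12 h
            exact gkn_deg3 ne24 ne25 ne45 dw12.symm d14.symm d15.symm
          ·
            have dw13 : (t1 + 1 = t3 ∨ t3 + 1 = t1) := w13 h
            exact gkn_deg3 ne34 ne35 ne45 dw13.symm d14.symm d15.symm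
        ·
          have d34 : (t3 + 1 = t4 ∨ t4 + 1 = t3) := c34.resolve_left e3
          have d35 : (t3 + 1 = t5 ∨ t5 + 1 = t3) := c35.resolve_left (fun h => e3 (h.trans e45.symm))
          exact gkn_cyc4 ne13 ne45 d14 d34.symm d35 d15.symm
      ·
        have d24 : (t2 + 1 = t4 ∨ t4 + 1 = t2) := c24.resolve_left e2
        have d25 : (t2 + 1 = t5 ∨ t5 + 1 = t2) := c25.resolve_left (fun h => e2 (h.trans e45.symm))
        by_cases e3 : i3 = i4
        ·
          exact gkn_cyc4 ne12 ne45 d14 d24.symm d25 d15.symm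
        ·
          have d34 : (t3 + 1 = t4 ∨ t4 + 1 = t3) := c34.resolve_left e3
          have d35 : (t3 + 1 = t5 ∨ t5 + 1 = t3) := c35.resolve_left (fun h => e3 (h.trans e45.symm))
          exact gkn_cyc4 ne12 ne45 d14 d24.symm d25 d15.symm
  ·
    by_cases e14 : i1 = i4
    ·
      have d15 : (t1 + 1 = t5 ∨ t5 + 1 = t1) := c15.resolve_left (fun h => e45 (e14.symm.trans h))
      by_cases e24 : i2 = i4
      ·
        have d25 : (t2 + 1 = t5 ∨ t5 + 1 = t2) := c25.resolve_left (fun h => e45 (e24.symm.trans h))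
        by_cases e34 : i3 = i4
        ·
          have d35 : (t3 + 1 = t5 ∨ t5 + 1 = t3) := c35.resolve_left (fun h => e45 (e34.symm.trans h))
          have dqr : (t1 + 1 = t2 ∨ t2 + 1 = t1) := m12 (e14.trans e24.symm)
          exact gkn_tri ne12 ne15 ne25 dqr d15 d25
        ·
          by_cases e35 : i3 = i5
          ·
            have d34 : (t3 + 1 = t4 ∨ t4 + 1 = t3) := c34.resolve_left e34
            have dqr : (t1 + 1 = t2 ∨ t2 + 1 = t1) := m12 (e14.trans e24.symm)
            exact gkn_tri ne12 ne15 ne25 dqr d15 d25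
          ·
            have d34 : (t3 + 1 = t4 ∨ t4 + 1 = t3) := c34.resolve_left e34
            have d35 : (t3 + 1 = t5 ∨ t5 + 1 = t3) := c35.resolve_left e35
            have dqr : (t1 + 1 = t2 ∨ t2 + 1 = t1) := m12 (e14.trans e24.symm)
            exact gkn_tri ne12 ne15 ne25 dqr d15 d25
      ·
        by_cases e25 : i2 = i5
        ·
          have d24 : (t2 + 1 = t4 ∨ t4 + 1 = t2) := c24.resolve_left e24
          by_cases e34 : i3 = i4
          ·
            have d35 : (t3 + 1 = t5 ∨ t5 + 1 = t3) := c35.resolve_left (fun h => e45 (e34.symm.trans h))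
            have dqr : (t1 + 1 = t3 ∨ t3 + 1 = t1) := m13 (e14.trans e34.symm)
            exact gkn_tri ne13 ne15 ne35 dqr d15 d35
          ·
            by_cases e35 : i3 = i5
            ·
              have d34 : (t3 + 1 = t4 ∨ t4 + 1 = t3) := c34.resolve_left e34
              have dqr : (t2 + 1 = t3 ∨ t3 + 1 = t2) := m23 (e25.trans e35.symm)
              exact gkn_tri ne23 ne24 ne34 dqr d24 d34
            ·
              have d34 : (t3 + 1 = t4 ∨ t4 + 1 = t3) := c34.resolve_left e34
              have d35 : (t3 + 1 = t5 ∨ t5 + 1 = t3) := c35.resolve_left e35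
              rcases gkn_pige3 hs3 hs1 hs2 with h | h | h
              ·
                have dw13 : (t1 + 1 = t3 ∨ t3 + 1 = t1) := w13 h.symm
                exact gkn_deg3 ne14 ne15 ne45 dw13 d34.symm d35.symm
              ·
                have dw23 : (t2 + 1 = t3 ∨ t3 + 1 = t2) := w23 h.symm
                exact gkn_deg3 ne24 ne25 ne45 dw23 d34.symm d35.symm
              ·
                have dw12 : (t1 + 1 = t2 ∨ t2 + 1 = t1) := w12 h
                exact gkn_cyc5 d15.symm dw12 d24 d34.symm d35
        ·
          have d24 : (t2 + 1 = t4 ∨ t4 + 1 = t2) := c24.resolve_left e24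
          have d25 : (t2 + 1 = t5 ∨ t5 + 1 = t2) := c25.resolve_left e25
          by_cases e34 : i3 = i4
          ·
            have d35 : (t3 + 1 = t5 ∨ t5 + 1 = t3) := c35.resolve_left (fun h => e45 (e34.symm.trans h))
            have dqr : (t1 + 1 = t3 ∨ t3 + 1 = t1) := m13 (e14.trans e34.symm)
            exact gkn_tri ne13 ne15 ne35 dqr d15 d35
          ·
            by_cases e35 : i3 = i5
            ·
              have d34 : (t3 + 1 = t4 ∨ t4 + 1 = t3) := c34.resolve_left e34
              rcases gkn_pige3 hs2 hs1 hs3 with h | h | h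
              ·
                have dw12 : (t1 + 1 = t2 ∨ t2 + 1 = t1) := w12 h.symm
                exact gkn_deg3 ne14 ne15 ne45 dw12 d24.symm d25.symm
              ·
                have dw23 : (t2 + 1 = t3 ∨ t3 + 1 = t2) := w23 h
                exact gkn_deg3 ne34 ne35 ne45 dw23.symm d24.symm d25.symm
              ·
                have dw13 : (t1 + 1 = t3 ∨ t3 + 1 = t1) := w13 h
                exact gkn_cyc5 d15.symm dw13 d34 d24.symm d25
            ·
              have d34 : (t3 + 1 = t4 ∨ t4 + 1 = t3) := c34.resolve_left e34
              have d35 : (t3 + 1 = t5 ∨ t5 + 1 = t3) := c35.resolve_left e35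
              exact gkn_cyc4 ne23 ne45 d24 d34.symm d35 d25.symm
    ·
      by_cases e15 : i1 = i5
      ·
        have d14 : (t1 + 1 = t4 ∨ t4 + 1 = t1) := c14.resolve_left e14
        by_cases e24 : i2 = i4
        ·
          have d25 : (t2 + 1 = t5 ∨ t5 + 1 = t2) := c25.resolve_left (fun h => e45 (e24.symm.trans h))
          by_cases e34 : i3 = i4
          ·
            have d35 : (t3 + 1 = t5 ∨ t5 + 1 = t3) := c35.resolve_left (fun h => e45 (e34.symm.trans h))
            have dqr : (t2 + 1 = t3 ∨ t3 + 1 = t2) := m23 (e24.trans e34.symm)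
            exact gkn_tri ne23 ne25 ne35 dqr d25 d35
          ·
            by_cases e35 : i3 = i5
            ·
              have d34 : (t3 + 1 = t4 ∨ t4 + 1 = t3) := c34.resolve_left e34
              have dqr : (t1 + 1 = t3 ∨ t3 + 1 = t1) := m13 (e15.trans e35.symm)
              exact gkn_tri ne13 ne14 ne34 dqr d14 d34
            ·
              have d34 : (t3 + 1 = t4 ∨ t4 + 1 = t3) := c34.resolve_left e34
              have d35 : (t3 + 1 = t5 ∨ t5 + 1 = t3) := c35.resolve_left e35
              rcases gkn_pige3 hs3 hs2 hs1 with h | h | h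
              ·
                have dw23 : (t2 + 1 = t3 ∨ t3 + 1 = t2) := w23 h.symm
                exact gkn_deg3 ne24 ne25 ne45 dw23 d34.symm d35.symm
              ·
                have dw13 : (t1 + 1 = t3 ∨ t3 + 1 = t1) := w13 h.symm
                exact gkn_deg3 ne14 ne15 ne45 dw13 d34.symm d35.symm
              ·
                have dw12 : (t1 + 1 = t2 ∨ t2 + 1 = t1) := w12 h.symm
                exact gkn_cyc5 d25.symm dw12.symm d14 d34.symm d35
        ·
          by_cases e25 : i2 = i5
          ·
            have d24 : (t2 + 1 = t4 ∨ t4 + 1 = t2) := c24.resolve_left e24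
            by_cases e34 : i3 = i4
            ·
              have d35 : (t3 + 1 = t5 ∨ t5 + 1 = t3) := c35.resolve_left (fun h => e45 (e34.symm.trans h))
              have dqr : (t1 + 1 = t2 ∨ t2 + 1 = t1) := m12 (e15.trans e25.symm)
              exact gkn_tri ne12 ne14 ne24 dqr d14 d24
            ·
              by_cases e35 : i3 = i5
              ·
                have d34 : (t3 + 1 = t4 ∨ t4 + 1 = t3) := c34.resolve_left e34
                have dqr : (t1 + 1 = t2 ∨ t2 + 1 = t1) := m12 (e15.trans e25.symm)
                exact gkn_tri ne12 ne14 ne24 dqr d14 d24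
              ·
                have d34 : (t3 + 1 = t4 ∨ t4 + 1 = t3) := c34.resolve_left e34
                have d35 : (t3 + 1 = t5 ∨ t5 + 1 = t3) := c35.resolve_left e35
                have dqr : (t1 + 1 = t2 ∨ t2 + 1 = t1) := m12 (e15.trans e25.symm)
                exact gkn_tri ne12 ne14 ne24 dqr d14 d24
          ·
            have d24 : (t2 + 1 = t4 ∨ t4 + 1 = t2) := c24.resolve_left e24
            have d25 : (t2 + 1 = t5 ∨ t5 + 1 = t2) := c25.resolve_left e25
            by_cases e34 : i3 = i4
            ·
              have d35 : (t3 + 1 = t5 ∨ t5 + 1 = t3) := c35.resolve_left (fun h => e45 (e34.symm.trans h))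
              rcases gkn_pige3 hs2 hs3 hs1 with h | h | h
              ·
                have dw23 : (t2 + 1 = t3 ∨ t3 + 1 = t2) := w23 h
                exact gkn_deg3 ne34 ne35 ne45 dw23.symm d24.symm d25.symm
              ·
                have dw12 : (t1 + 1 = t2 ∨ t2 + 1 = t1) := w12 h.symm
                exact gkn_deg3 ne14 ne15 ne45 dw12 d24.symm d25.symm
              ·
                have dw13 : (t1 + 1 = t3 ∨ t3 + 1 = t1) := w13 h.symm
                exact gkn_cyc5 d35.symm dw13.symm d14 d24.symm d25
            ·
              by_cases e35 : i3 = i5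
              ·
                have d34 : (t3 + 1 = t4 ∨ t4 + 1 = t3) := c34.resolve_left e34
                have dqr : (t1 + 1 = t3 ∨ t3 + 1 = t1) := m13 (e15.trans e35.symm)
                exact gkn_tri ne13 ne14 ne34 dqr d14 d34
              ·
                have d34 : (t3 + 1 = t4 ∨ t4 + 1 = t3) := c34.resolve_left e34
                have d35 : (t3 + 1 = t5 ∨ t5 + 1 = t3) := c35.resolve_left e35
                exact gkn_cyc4 ne23 ne45 d24 d34.symm d35 d25.symm
      ·
        have d14 : (t1 + 1 = t4 ∨ t4 + 1 = t1) := c14.resolve_left e14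
        have d15 : (t1 + 1 = t5 ∨ t5 + 1 = t1) := c15.resolve_left e15
        by_cases e24 : i2 = i4
        ·
          have d25 : (t2 + 1 = t5 ∨ t5 + 1 = t2) := c25.resolve_left (fun h => e45 (e24.symm.trans h))
          by_cases e34 : i3 = i4
          ·
            have d35 : (t3 + 1 = t5 ∨ t5 + 1 = t3) := c35.resolve_left (fun h => e45 (e34.symm.trans h))
            have dqr : (t2 + 1 = t3 ∨ t3 + 1 = t2) := m23 (e24.trans e34.symm)
            exact gkn_tri ne23 ne25 ne35 dqr d25 d35
          ·
            by_cases e35 : i3 = i5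
            ·
              have d34 : (t3 + 1 = t4 ∨ t4 + 1 = t3) := c34.resolve_left e34
              rcases gkn_pige3 hs1 hs2 hs3 with h | h | h
              ·
                have dw12 : (t1 + 1 = t2 ∨ t2 + 1 = t1) := w12 h
                exact gkn_deg3 ne24 ne25 ne45 dw12.symm d14.symm d15.symm
              ·
                have dw13 : (t1 + 1 = t3 ∨ t3 + 1 = t1) := w13 h
                exact gkn_deg3 ne34 ne35 ne45 dw13.symm d14.symm d15.symm
              ·
                have dw23 : (t2 + 1 = t3 ∨ t3 + 1 = t2) := w23 h
                exact gkn_cyc5 d25.symm dw23 d34 d14.symm d15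
            ·
              have d34 : (t3 + 1 = t4 ∨ t4 + 1 = t3) := c34.resolve_left e34
              have d35 : (t3 + 1 = t5 ∨ t5 + 1 = t3) := c35.resolve_left e35
              exact gkn_cyc4 ne13 ne45 d14 d34.symm d35 d15.symm
        ·
          by_cases e25 : i2 = i5
          ·
            have d24 : (t2 + 1 = t4 ∨ t4 + 1 = t2) := c24.resolve_left e24
            by_cases e34 : i3 = i4
            ·
              have d35 : (t3 + 1 = t5 ∨ t5 + 1 = t3) := c35.resolve_left (fun h => e45 (e34.symm.trans h))
              rcases gkn_pige3 hs1 hs3 hs2 with h | h | h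
              ·
                have dw13 : (t1 + 1 = t3 ∨ t3 + 1 = t1) := w13 h
                exact gkn_deg3 ne34 ne35 ne45 dw13.symm d14.symm d15.symm
              ·
                have dw12 : (t1 + 1 = t2 ∨ t2 + 1 = t1) := w12 h
                exact gkn_deg3 ne24 ne25 ne45 dw12.symm d14.symm d15.symm
              ·
                have dw23 : (t2 + 1 = t3 ∨ t3 + 1 = t2) := w23 h.symm
                exact gkn_cyc5 d35.symm dw23.symm d24 d14.symm d15
            ·
              by_cases e35 : i3 = i5
              ·
                have d34 : (t3 + 1 = t4 ∨ t4 + 1 = t3) := c34.resolve_left e34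
                have dqr : (t2 + 1 = t3 ∨ t3 + 1 = t2) := m23 (e25.trans e35.symm)
                exact gkn_tri ne23 ne24 ne34 dqr d24 d34
              ·
                have d34 : (t3 + 1 = t4 ∨ t4 + 1 = t3) := c34.resolve_left e34
                have d35 : (t3 + 1 = t5 ∨ t5 + 1 = t3) := c35.resolve_left e35
                exact gkn_cyc4 ne13 ne45 d14 d34.symm d35 d15.symm
          ·
            have d24 : (t2 + 1 = t4 ∨ t4 + 1 = t2) := c24.resolve_left e24
            have d25 : (t2 + 1 = t5 ∨ t5 + 1 = t2) := c25.resolve_left e25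
            by_cases e34 : i3 = i4
            ·
              have d35 : (t3 + 1 = t5 ∨ t5 + 1 = t3) := c35.resolve_left (fun h => e45 (e34.symm.trans h))
              exact gkn_cyc4 ne12 ne45 d14 d24.symm d25 d15.symm
            ·
              by_cases e35 : i3 = i5
              ·
                have d34 : (t3 + 1 = t4 ∨ t4 + 1 = t3) := c34.resolve_left e34
                exact gkn_cyc4 ne12 ne45 d14 d24.symm d25 d15.symm
              ·
                have d34 : (t3 + 1 = t4 ∨ t4 + 1 = t3) := c34.resolve_left e34
                have d35 : (t3 + 1 = t5 ∨ t5 + 1 = t3) := c35.resolve_left e35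
                exact gkn_cyc4 ne12 ne45 d14 d24.symm d25 d15.symm

private lemma gkn_key5 (lam1 lam2 lam3 lam4 lam5 s1 s2 s3 s4 s5 i1 i2 i3 i4 i5 t1 t2 t3 t4 t5 : ℕ)
    (hl1 : lam1 < 2) (hl2 : lam2 < 2) (hl3 : lam3 < 2) (hl4 : lam4 < 2) (hl5 : lam5 < 2)
    (hs1 : s1 < 2) (hs2 : s2 < 2) (hs3 : s3 < 2) (hs4 : s4 < 2) (hs5 : s5 < 2)
    (ne12 : t1 ≠ t2) (ne13 : t1 ≠ t3) (ne14 : t1 ≠ t4) (ne15 : t1 ≠ t5) (ne23 : t2 ≠ t3) (ne24 : t2 ≠ t4) (ne25 : t2 ≠ t5) (ne34 : t3 ≠ t4) (ne35 : t3 ≠ t5) (ne45 : t4 ≠ t5)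
    (P12 : (lam1 = lam2 → s1 = s2 → i1 ≠ i2) ∧ (lam1 = lam2 → s1 = s2 → (t1 + 1 = t2 ∨ t2 + 1 = t1)) ∧ (lam1 = lam2 → i1 = i2 → (t1 + 1 = t2 ∨ t2 + 1 = t1)) ∧ (lam1 ≠ lam2 → (i1 = i2 ∨ (t1 + 1 = t2 ∨ t2 + 1 = t1))))
    (P13 : (lam1 = lam3 → s1 = s3 → i1 ≠ i3) ∧ (lam1 = lam3 → s1 = s3 → (t1 + 1 = t3 ∨ t3 + 1 = t1)) ∧ (lam1 = lam3 → i1 = i3 → (t1 + 1 = t3 ∨ t3 + 1 = t1)) ∧ (lam1 ≠ lam3 → (i1 = i3 ∨ (t1 + 1 = t3 ∨ t3 + 1 = t1))))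
    (P14 : (lam1 = lam4 → s1 = s4 → i1 ≠ i4) ∧ (lam1 = lam4 → s1 = s4 → (t1 + 1 = t4 ∨ t4 + 1 = t1)) ∧ (lam1 = lam4 → i1 = i4 → (t1 + 1 = t4 ∨ t4 + 1 = t1)) ∧ (lam1 ≠ lam4 → (i1 = i4 ∨ (t1 + 1 = t4 ∨ t4 + 1 = t1))))
    (P15 : (lam1 = lam5 → s1 = s5 → i1 ≠ i5) ∧ (lam1 = lam5 → s1 = s5 → (t1 + 1 = t5 ∨ t5 + 1 = t1)) ∧ (lam1 = lam5 → i1 = i5 → (t1 + 1 = t5 ∨ t5 + 1 = t1)) ∧ (lam1 ≠ lam5 → (i1 = i5 ∨ (t1 + 1 = t5 ∨ t5 + 1 = t1))))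
    (P23 : (lam2 = lam3 → s2 = s3 → i2 ≠ i3) ∧ (lam2 = lam3 → s2 = s3 → (t2 + 1 = t3 ∨ t3 + 1 = t2)) ∧ (lam2 = lam3 → i2 = i3 → (t2 + 1 = t3 ∨ t3 + 1 = t2)) ∧ (lam2 ≠ lam3 → (i2 = i3 ∨ (t2 + 1 = t3 ∨ t3 + 1 = t2))))
    (P24 : (lam2 = lam4 → s2 = s4 → i2 ≠ i4) ∧ (lam2 = lam4 → s2 = s4 → (t2 + 1 = t4 ∨ t4 + 1 = t2)) ∧ (lam2 = lam4 → i2 = i4 → (t2 + 1 = t4 ∨ t4 + 1 = t2)) ∧ (lam2 ≠ lam4 → (i2 = i4 ∨ (t2 + 1 = t4 ∨ t4 + 1 = t2))))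
    (P25 : (lam2 = lam5 → s2 = s5 → i2 ≠ i5) ∧ (lam2 = lam5 → s2 = s5 → (t2 + 1 = t5 ∨ t5 + 1 = t2)) ∧ (lam2 = lam5 → i2 = i5 → (t2 + 1 = t5 ∨ t5 + 1 = t2)) ∧ (lam2 ≠ lam5 → (i2 = i5 ∨ (t2 + 1 = t5 ∨ t5 + 1 = t2))))
    (P34 : (lam3 = lam4 → s3 = s4 → i3 ≠ i4) ∧ (lam3 = lam4 → s3 = s4 → (t3 + 1 = t4 ∨ t4 + 1 = t3)) ∧ (lam3 = lam4 → i3 = i4 → (t3 + 1 = t4 ∨ t4 + 1 = t3)) ∧ (lam3 ≠ lam4 → (i3 = i4 ∨ (t3 + 1 = t4 ∨ t4 + 1 = t3))))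
    (P35 : (lam3 = lam5 → s3 = s5 → i3 ≠ i5) ∧ (lam3 = lam5 → s3 = s5 → (t3 + 1 = t5 ∨ t5 + 1 = t3)) ∧ (lam3 = lam5 → i3 = i5 → (t3 + 1 = t5 ∨ t5 + 1 = t3)) ∧ (lam3 ≠ lam5 → (i3 = i5 ∨ (t3 + 1 = t5 ∨ t5 + 1 = t3))))
    (P45 : (lam4 = lam5 → s4 = s5 → i4 ≠ i5) ∧ (lam4 = lam5 → s4 = s5 → (t4 + 1 = t5 ∨ t5 + 1 = t4)) ∧ (lam4 = lam5 → i4 = i5 → (t4 + 1 = t5 ∨ t5 + 1 = t4)) ∧ (lam4 ≠ lam5 → (i4 = i5 ∨ (t4 + 1 = t5 ∨ t5 + 1 = t4))))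
    : False := by
  rcases gkn_two hl1 with h1 | h1
  ·
    rcases gkn_two hl2 with h2 | h2
    ·
      rcases gkn_two hl3 with h3 | h3
      ·
        rcases gkn_two hl4 with h4 | h4
        ·
          rcases gkn_two hl5 with h5 | h5
          ·
            exact gkn_sub5 s1 s2 s3 s4 s5 t1 t2 t3 t4 t5 hs1 hs2 hs3 hs4 hs5 ne12 ne13 ne14 ne15 ne23 ne24 ne25 ne34 ne35 ne45 (P12.2.1 (h1.trans h2.symm)) (P13.2.1 (h1.trans h3.symm)) (P14.2.1 (h1.trans h4.symm)) (P15.2.1 (h1.trans h5.symm)) (P23.2.1 (h2.trans h3.symm)) (P24.2.1 (h2.trans h4.symm)) (P25.2.1 (h2.trans h5.symm)) (P34.2.1 (h3.trans h4.symm)) (P35.2.1 (h3.trans h5.symm)) (P45.2.1 (h4.trans h5.symm))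
          ·
            exact gkn_sub4 s1 s2 s3 s4 i1 i2 i3 i4 i5 t1 t2 t3 t4 t5 hs1 hs2 hs3 hs4 ne12 ne13 ne14 ne15 ne23 ne24 ne25 ne34 ne35 ne45 (P12.1 (h1.trans h2.symm)) (P13.1 (h1.trans h3.symm)) (P14.1 (h1.trans h4.symm)) (P23.1 (h2.trans h3.symm)) (P24.1 (h2.trans h4.symm)) (P34.1 (h3.trans h4.symm)) (P12.2.1 (h1.trans h2.symm)) (P13.2.1 (h1.trans h3.symm)) (P14.2.1 (h1.trans h4.symm)) (P23.2.1 (h2.trans h3.symm)) (P24.2.1 (h2.trans h4.symm)) (P34.2.1 (h3.trans h4.symm)) (P12.2.2.1 (h1.trans h2.symm)) (P13.2.2.1 (h1.trans h3.symm)) (P14.2.2.1 (h1.trans h4.symm)) (P23.2.2.1 (h2.trans h3.symm)) (P24.2.2.1 (h2.trans h4.symm)) (P34.2.2.1 (h3.trans h4.symm)) (P15.2.2.2 (gkn_ne01 h1 h5)) (P25.2.2.2 (gkn_ne01 h2 h5)) (P35.2.2.2 (gkn_ne01 h3 h5)) (P45.2.2.2 (gkn_ne01 h4 h5))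
        ·
          rcases gkn_two hl5 with h5 | h5
          ·
            exact gkn_sub4 s1 s2 s3 s5 i1 i2 i3 i5 i4 t1 t2 t3 t5 t4 hs1 hs2 hs3 hs5 ne12 ne13 ne15 ne14 ne23 ne25 ne24 ne35 ne34 ne45.symm (P12.1 (h1.trans h2.symm)) (P13.1 (h1.trans h3.symm)) (P15.1 (h1.trans h5.symm)) (P23.1 (h2.trans h3.symm)) (P25.1 (h2.trans h5.symm)) (P35.1 (h3.trans h5.symm)) (P12.2.1 (h1.trans h2.symm)) (P13.2.1 (h1.trans h3.symm)) (P15.2.1 (h1.trans h5.symm)) (P23.2.1 (h2.trans h3.symm)) (P25.2.1 (h2.trans h5.symm)) (P35.2.1 (h3.trans h5.symm)) (P12.2.2.1 (h1.trans h2.symm)) (P13.2.2.1 (h1.trans h3.symm)) (P15.2.2.1 (h1.trans h5.symm)) (P23.2.2.1 (h2.trans h3.symm)) (P25.2.2.1 (h2.trans h5.symm)) (P35.2.2.1 (h3.trans h5.symm)) (P14.2.2.2 (gkn_ne01 h1 h4)) (P24.2.2.2 (gkn_ne01 h2 h4)) (P34.2.2.2 (gkn_ne01 h3 h4)) (gkn_csymm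 (P45.2.2.2 (gkn_ne10 h4 h5)))
          ·
            exact gkn_sub32 s1 s2 s3 s4 s5 i1 i2 i3 i4 i5 t1 t2 t3 t4 t5 hs1 hs2 hs3 hs4 hs5 ne12 ne13 ne14 ne15 ne23 ne24 ne25 ne34 ne35 ne45 (P12.1 (h1.trans h2.symm)) (P13.1 (h1.trans h3.symm)) (P23.1 (h2.trans h3.symm)) (P45.1 (h4.trans h5.symm)) (P12.2.1 (h1.trans h2.symm)) (P13.2.1 (h1.trans h3.symm)) (P23.2.1 (h2.trans h3.symm)) (P45.2.1 (h4.trans h5.symm)) (P12.2.2.1 (h1.trans h2.symm)) (P13.2.2.1 (h1.trans h3.symm)) (P23.2.2.1 (h2.trans h3.symm)) (P45.2.2.1 (h4.trans h5.symm)) (P14.2.2.2 (gkn_ne01 h1 h4)) (P15.2.2.2 (gkn_ne01 h1 h5)) (P24.2.2.2 (gkn_ne01 h2 h4)) (P25.2.2.2 (gkn_ne01 h2 h5)) (P34.2.2.2 (gkn_ne01 h3 h4)) (P35.2.2.2 (gkn_ne01 h3 h5))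
      ·
        rcases gkn_two hl4 with h4 | h4
        ·
          rcases gkn_two hl5 with h5 | h5
          ·
            exact gkn_sub4 s1 s2 s4 s5 i1 i2 i4 i5 i3 t1 t2 t4 t5 t3 hs1 hs2 hs4 hs5 ne12 ne14 ne15 ne13 ne24 ne25 ne23 ne45 ne34.symm ne35.symm (P12.1 (h1.trans h2.symm)) (P14.1 (h1.trans h4.symm)) (P15.1 (h1.trans h5.symm)) (P24.1 (h2.trans h4.symm)) (P25.1 (h2.trans h5.symm)) (P45.1 (h4.trans h5.symm)) (P12.2.1 (h1.trans h2.symm)) (P14.2.1 (h1.trans h4.symm)) (P15.2.1 (h1.trans h5.symm)) (P24.2.1 (h2.trans h4.symm)) (P25.2.1 (h2.trans h5.symm)) (P45.2.1 (h4.trans h5.symm)) (P12.2.2.1 (h1.trans h2.symm)) (P14.2.2.1 (h1.trans h4.symm)) (P15.2.2.1 (h1.trans h5.symm)) (P24.2.2.1 (h2.trans h4.symm)) (P25.2.2.1 (h2.trans h5.symm)) (P45.2.2.1 (h4.trans h5.symm)) (P13.2.2.2 (gkn_ne01 h1 h3)) (P23.2.2.2 (gkn_ne01 h2 h3)) (gkn_csymm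 (P34.2.2.2 (gkn_ne10 h3 h4))) (gkn_csymm (P35.2.2.2 (gkn_ne10 h3 h5)))
          ·
            exact gkn_sub32 s1 s2 s4 s3 s5 i1 i2 i4 i3 i5 t1 t2 t4 t3 t5 hs1 hs2 hs4 hs3 hs5 ne12 ne14 ne13 ne15 ne24 ne23 ne25 ne34.symm ne45 ne35 (P12.1 (h1.trans h2.symm)) (P14.1 (h1.trans h4.symm)) (P24.1 (h2.trans h4.symm)) (P35.1 (h3.trans h5.symm)) (P12.2.1 (h1.trans h2.symm)) (P14.2.1 (h1.trans h4.symm)) (P24.2.1 (h2.trans h4.symm)) (P35.2.1 (h3.trans h5.symm)) (P12.2.2.1 (h1.trans h2.symm)) (P14.2.2.1 (h1.trans h4.symm)) (P24.2.2.1 (h2.trans h4.symm)) (P35.2.2.1 (h3.trans h5.symm)) (P13.2.2.2 (gkn_ne01 h1 h3)) (P15.2.2.2 (gkn_ne01 h1 h5)) (P23.2.2.2 (gkn_ne01 h2 h3)) (P25.2.2.2 (gkn_ne01 h2 h5)) (gkn_csymm (P34.2.2.2 (gkn_ne10 h3 h4))) (P45.2.2.2 (gkn_ne01 h4 h5))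
        ·
          rcases gkn_two hl5 with h5 | h5
          ·
            exact gkn_sub32 s1 s2 s5 s3 s4 i1 i2 i5 i3 i4 t1 t2 t5 t3 t4 hs1 hs2 hs5 hs3 hs4 ne12 ne15 ne13 ne14 ne25 ne23 ne24 ne35.symm ne45.symm ne34 (P12.1 (h1.trans h2.symm)) (P15.1 (h1.trans h5.symm)) (P25.1 (h2.trans h5.symm)) (P34.1 (h3.trans h4.symm)) (P12.2.1 (h1.trans h2.symm)) (P15.2.1 (h1.trans h5.symm)) (P25.2.1 (h2.trans h5.symm)) (P34.2.1 (h3.trans h4.symm)) (P12.2.2.1 (h1.trans h2.symm)) (P15.2.2.1 (h1.trans h5.symm)) (P25.2.2.1 (h2.trans h5.symm)) (P34.2.2.1 (h3.trans h4.symm)) (P13.2.2.2 (gkn_ne01 h1 h3)) (P14.2.2.2 (gkn_ne01 h1 h4)) (P23.2.2.2 (gkn_ne01 h2 h3)) (P24.2.2.2 (gkn_ne01 h2 h4)) (gkn_csymm (P35.2.2.2 (gkn_ne10 h3 h5))) (gkn_csymm (P45.2.2.2 (gkn_ne10 h4 h5)))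
          ·
            exact gkn_sub32 s3 s4 s5 s1 s2 i3 i4 i5 i1 i2 t3 t4 t5 t1 t2 hs3 hs4 hs5 hs1 hs2 ne34 ne35 ne13.symm ne23.symm ne45 ne14.symm ne24.symm ne15.symm ne25.symm ne12 (P34.1 (h3.trans h4.symm)) (P35.1 (h3.trans h5.symm)) (P45.1 (h4.trans h5.symm)) (P12.1 (h1.trans h2.symm)) (P34.2.1 (h3.trans h4.symm)) (P35.2.1 (h3.trans h5.symm)) (P45.2.1 (h4.trans h5.symm)) (P12.2.1 (h1.trans h2.symm)) (P34.2.2.1 (h3.trans h4.symm)) (P35.2.2.1 (h3.trans h5.symm)) (P45.2.2.1 (h4.trans h5.symm)) (P12.2.2.1 (h1.trans h2.symm)) (gkn_csymm (P13.2.2.2 (gkn_ne01 h1 h3))) (gkn_csymm (P23.2.2.2 (gkn_ne01 h2 h3))) (gkn_csymm (P14.2.2.2 (gkn_ne01 h1 h4))) (gkn_csymm (P24.2.2.2 (gkn_ne01 h2 h4))) (gkn_csymm (P15.2.2.2 (gkn_ne01 h1 h5))) (gkn_csymm (P25.2.2.2 (gkn_ne01 h2 h5)))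
    ·
      rcases gkn_two hl3 with h3 | h3
      ·
        rcases gkn_two hl4 with h4 | h4
        ·
          rcases gkn_two hl5 with h5 | h5
          ·
            exact gkn_sub4 s1 s3 s4 s5 i1 i3 i4 i5 i2 t1 t3 t4 t5 t2 hs1 hs3 hs4 hs5 ne13 ne14 ne15 ne12 ne34 ne35 ne23.symm ne45 ne24.symm ne25.symm (P13.1 (h1.trans h3.symm)) (P14.1 (h1.trans h4.symm)) (P15.1 (h1.trans h5.symm)) (P34.1 (h3.trans h4.symm)) (P35.1 (h3.trans h5.symm)) (P45.1 (h4.trans h5.symm)) (P13.2.1 (h1.trans h3.symm)) (P14.2.1 (h1.trans h4.symm)) (P15.2.1 (h1.trans h5.symm)) (P34.2.1 (h3.trans h4.symm)) (P35.2.1 (h3.trans h5.symm)) (P45.2.1 (h4.trans h5.symm)) (P13.2.2.1 (h1.trans h3.symm)) (P14.2.2.1 (h1.trans h4.symm)) (P15.2.2.1 (h1.trans h5.symm)) (P34.2.2.1 (h3.trans h4.symm)) (P35.2.2.1 (h3.trans h5.symm)) (P45.2.2.1 (h4.trans h5.symm)) (P12.2.2.2 (gkn_ne01 h1 h2)) (gkn_csymm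 (P23.2.2.2 (gkn_ne10 h2 h3))) (gkn_csymm (P24.2.2.2 (gkn_ne10 h2 h4))) (gkn_csymm (P25.2.2.2 (gkn_ne10 h2 h5)))
          ·
            exact gkn_sub32 s1 s3 s4 s2 s5 i1 i3 i4 i2 i5 t1 t3 t4 t2 t5 hs1 hs3 hs4 hs2 hs5 ne13 ne14 ne12 ne15 ne34 ne23.symm ne35 ne24.symm ne45 ne25 (P13.1 (h1.trans h3.symm)) (P14.1 (h1.trans h4.symm)) (P34.1 (h3.trans h4.symm)) (P25.1 (h2.trans h5.symm)) (P13.2.1 (h1.trans h3.symm)) (P14.2.1 (h1.trans h4.symm)) (P34.2.1 (h3.trans h4.symm)) (P25.2.1 (h2.trans h5.symm)) (P13.2.2.1 (h1.trans h3.symm)) (P14.2.2.1 (h1.trans h4.symm)) (P34.2.2.1 (h3.trans h4.symm)) (P25.2.2.1 (h2.trans h5.symm)) (P12.2.2.2 (gkn_ne01 h1 h2)) (P15.2.2.2 (gkn_ne01 h1 h5)) (gkn_csymm (P23.2.2.2 (gkn_ne10 h2 h3))) (P35.2.2.2 (gkn_ne01 h3 h5)) (gkn_csymm (P24.2.2.2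 (gkn_ne10 h2 h4))) (P45.2.2.2 (gkn_ne01 h4 h5))
        ·
          rcases gkn_two hl5 with h5 | h5
          ·
            exact gkn_sub32 s1 s3 s5 s2 s4 i1 i3 i5 i2 i4 t1 t3 t5 t2 t4 hs1 hs3 hs5 hs2 hs4 ne13 ne15 ne12 ne14 ne35 ne23.symm ne34 ne25.symm ne45.symm ne24 (P13.1 (h1.trans h3.symm)) (P15.1 (h1.trans h5.symm)) (P35.1 (h3.trans h5.symm)) (P24.1 (h2.trans h4.symm)) (P13.2.1 (h1.trans h3.symm)) (P15.2.1 (h1.trans h5.symm)) (P35.2.1 (h3.trans h5.symm)) (P24.2.1 (h2.trans h4.symm)) (P13.2.2.1 (h1.trans h3.symm)) (P15.2.2.1 (h1.trans h5.symm)) (P35.2.2.1 (h3.trans h5.symm)) (P24.2.2.1 (h2.trans h4.symm)) (P12.2.2.2 (gkn_ne01 h1 h2)) (P14.2.2.2 (gkn_ne01 h1 h4)) (gkn_csymm (P23.2.2.2 (gkn_ne10 h2 h3))) (P34.2.2.2 (gkn_ne01 h3 h4)) (gkn_csymm (P25.2.2.2 (gkn_ne10 h2 h5))) (gkn_csymm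 (P45.2.2.2 (gkn_ne10 h4 h5)))
          ·
            exact gkn_sub32 s2 s4 s5 s1 s3 i2 i4 i5 i1 i3 t2 t4 t5 t1 t3 hs2 hs4 hs5 hs1 hs3 ne24 ne25 ne12.symm ne23 ne45 ne14.symm ne34.symm ne15.symm ne35.symm ne13 (P24.1 (h2.trans h4.symm)) (P25.1 (h2.trans h5.symm)) (P45.1 (h4.trans h5.symm)) (P13.1 (h1.trans h3.symm)) (P24.2.1 (h2.trans h4.symm)) (P25.2.1 (h2.trans h5.symm)) (P45.2.1 (h4.trans h5.symm)) (P13.2.1 (h1.trans h3.symm)) (P24.2.2.1 (h2.trans h4.symm)) (P25.2.2.1 (h2.trans h5.symm)) (P45.2.2.1 (h4.trans h5.symm)) (P13.2.2.1 (h1.trans h3.symm)) (gkn_csymm (P12.2.2.2 (gkn_ne01 h1 h2))) (P23.2.2.2 (gkn_ne10 h2 h3)) (gkn_csymm (P14.2.2.2 (gkn_ne01 h1 h4))) (gkn_csymm (P34.2.2.2 (gkn_ne01 h3 h4))) (gkn_csymm (P15.2.2.2 (gkn_ne01 h1 h5))) (gkn_csymm (P35.2.2.2 (gkn_ne01 h3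 h5)))
      ·
        rcases gkn_two hl4 with h4 | h4
        ·
          rcases gkn_two hl5 with h5 | h5
          ·
            exact gkn_sub32 s1 s4 s5 s2 s3 i1 i4 i5 i2 i3 t1 t4 t5 t2 t3 hs1 hs4 hs5 hs2 hs3 ne14 ne15 ne12 ne13 ne45 ne24.symm ne34.symm ne25.symm ne35.symm ne23 (P14.1 (h1.trans h4.symm)) (P15.1 (h1.trans h5.symm)) (P45.1 (h4.trans h5.symm)) (P23.1 (h2.trans h3.symm)) (P14.2.1 (h1.trans h4.symm)) (P15.2.1 (h1.trans h5.symm)) (P45.2.1 (h4.trans h5.symm)) (P23.2.1 (h2.trans h3.symm)) (P14.2.2.1 (h1.trans h4.symm)) (P15.2.2.1 (h1.trans h5.symm)) (P45.2.2.1 (h4.trans h5.symm)) (P23.2.2.1 (h2.trans h3.symm)) (P12.2.2.2 (gkn_ne01 h1 h2)) (P13.2.2.2 (gkn_ne01 h1 h3)) (gkn_csymm (P24.2.2.2 (gkn_ne10 h2 h4))) (gkn_csymm (P34.2.2.2 (gkn_ne10 h3 h4))) (gkn_csymm (P25.2.2.2 (gkn_ne10 h2 h5))) (gkn_csymm (P35.2.2.2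 (gkn_ne10 h3 h5)))
          ·
            exact gkn_sub32 s2 s3 s5 s1 s4 i2 i3 i5 i1 i4 t2 t3 t5 t1 t4 hs2 hs3 hs5 hs1 hs4 ne23 ne25 ne12.symm ne24 ne35 ne13.symm ne34 ne15.symm ne45.symm ne14 (P23.1 (h2.trans h3.symm)) (P25.1 (h2.trans h5.symm)) (P35.1 (h3.trans h5.symm)) (P14.1 (h1.trans h4.symm)) (P23.2.1 (h2.trans h3.symm)) (P25.2.1 (h2.trans h5.symm)) (P35.2.1 (h3.trans h5.symm)) (P14.2.1 (h1.trans h4.symm)) (P23.2.2.1 (h2.trans h3.symm)) (P25.2.2.1 (h2.trans h5.symm)) (P35.2.2.1 (h3.trans h5.symm)) (P14.2.2.1 (h1.trans h4.symm)) (gkn_csymm (P12.2.2.2 (gkn_ne01 h1 h2))) (P24.2.2.2 (gkn_ne10 h2 h4)) (gkn_csymm (P13.2.2.2 (gkn_ne01 h1 h3))) (P34.2.2.2 (gkn_ne10 h3 h4)) (gkn_csymm (P15.2.2.2 (gkn_ne01 h1 h5))) (gkn_csymm (P45.2.2.2 (gkn_ne01 h4 h5)))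
        ·
          rcases gkn_two hl5 with h5 | h5
          ·
            exact gkn_sub32 s2 s3 s4 s1 s5 i2 i3 i4 i1 i5 t2 t3 t4 t1 t5 hs2 hs3 hs4 hs1 hs5 ne23 ne24 ne12.symm ne25 ne34 ne13.symm ne35 ne14.symm ne45 ne15 (P23.1 (h2.trans h3.symm)) (P24.1 (h2.trans h4.symm)) (P34.1 (h3.trans h4.symm)) (P15.1 (h1.trans h5.symm)) (P23.2.1 (h2.trans h3.symm)) (P24.2.1 (h2.trans h4.symm)) (P34.2.1 (h3.trans h4.symm)) (P15.2.1 (h1.trans h5.symm)) (P23.2.2.1 (h2.trans h3.symm)) (P24.2.2.1 (h2.trans h4.symm)) (P34.2.2.1 (h3.trans h4.symm)) (P15.2.2.1 (h1.trans h5.symm)) (gkn_csymm (P12.2.2.2 (gkn_ne01 h1 h2))) (P25.2.2.2 (gkn_ne10 h2 h5)) (gkn_csymm (P13.2.2.2 (gkn_ne01 h1 h3))) (P35.2.2.2 (gkn_ne10 h3 h5)) (gkn_csymm (P14.2.2.2 (gkn_ne01 h1 h4))) (P45.2.2.2 (gkn_ne10 h4 h5))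
          ·
            exact gkn_sub4 s2 s3 s4 s5 i2 i3 i4 i5 i1 t2 t3 t4 t5 t1 hs2 hs3 hs4 hs5 ne23 ne24 ne25 ne12.symm ne34 ne35 ne13.symm ne45 ne14.symm ne15.symm (P23.1 (h2.trans h3.symm)) (P24.1 (h2.trans h4.symm)) (P25.1 (h2.trans h5.symm)) (P34.1 (h3.trans h4.symm)) (P35.1 (h3.trans h5.symm)) (P45.1 (h4.trans h5.symm)) (P23.2.1 (h2.trans h3.symm)) (P24.2.1 (h2.trans h4.symm)) (P25.2.1 (h2.trans h5.symm)) (P34.2.1 (h3.trans h4.symm)) (P35.2.1 (h3.trans h5.symm)) (P45.2.1 (h4.trans h5.symm)) (P23.2.2.1 (h2.trans h3.symm)) (P24.2.2.1 (h2.trans h4.symm)) (P25.2.2.1 (h2.trans h5.symm)) (P34.2.2.1 (h3.trans h4.symm)) (P35.2.2.1 (h3.trans h5.symm)) (P45.2.2.1 (h4.trans h5.symm)) (gkn_csymm (P12.2.2.2 (gkn_ne01 h1 h2))) (gkn_csymm (P13.2.2.2 (gkn_ne01 h1 h3))) (gkn_csymm (P14.2.2.2 (gkn_ne01 h1 h4)))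 (gkn_csymm (P15.2.2.2 (gkn_ne01 h1 h5)))
  ·
    rcases gkn_two hl2 with h2 | h2
    ·
      rcases gkn_two hl3 with h3 | h3
      ·
        rcases gkn_two hl4 with h4 | h4
        ·
          rcases gkn_two hl5 with h5 | h5
          ·
            exact gkn_sub4 s2 s3 s4 s5 i2 i3 i4 i5 i1 t2 t3 t4 t5 t1 hs2 hs3 hs4 hs5 ne23 ne24 ne25 ne12.symm ne34 ne35 ne13.symm ne45 ne14.symm ne15.symm (P23.1 (h2.trans h3.symm)) (P24.1 (h2.trans h4.symm)) (P25.1 (h2.trans h5.symm)) (P34.1 (h3.trans h4.symm)) (P35.1 (h3.trans h5.symm)) (P45.1 (h4.trans h5.symm)) (P23.2.1 (h2.trans h3.symm)) (P24.2.1 (h2.trans h4.symm)) (P25.2.1 (h2.trans h5.symm)) (P34.2.1 (h3.trans h4.symm)) (P35.2.1 (h3.trans h5.symm)) (P45.2.1 (h4.trans h5.symm)) (P23.2.2.1 (h2.trans h3.symm)) (P24.2.2.1 (h2.trans h4.symm)) (P25.2.2.1 (h2.trans h5.symm)) (P34.2.2.1 (h3.trans h4.symm)) (P35.2.2.1 (h3.trans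 h5.symm)) (P45.2.2.1 (h4.trans h5.symm)) (gkn_csymm (P12.2.2.2 (gkn_ne10 h1 h2))) (gkn_csymm (P13.2.2.2 (gkn_ne10 h1 h3))) (gkn_csymm (P14.2.2.2 (gkn_ne10 h1 h4))) (gkn_csymm (P15.2.2.2 (gkn_ne10 h1 h5)))
          ·
            exact gkn_sub32 s2 s3 s4 s1 s5 i2 i3 i4 i1 i5 t2 t3 t4 t1 t5 hs2 hs3 hs4 hs1 hs5 ne23 ne24 ne12.symm ne25 ne34 ne13.symm ne35 ne14.symm ne45 ne15 (P23.1 (h2.trans h3.symm)) (P24.1 (h2.trans h4.symm)) (P34.1 (h3.trans h4.symm)) (P15.1 (h1.trans h5.symm)) (P23.2.1 (h2.trans h3.symm)) (P24.2.1 (h2.trans h4.symm)) (P34.2.1 (h3.trans h4.symm)) (P15.2.1 (h1.trans h5.symm)) (P23.2.2.1 (h2.trans h3.symm)) (P24.2.2.1 (h2.trans h4.symm)) (P34.2.2.1 (h3.trans h4.symm)) (P15.2.2.1 (h1.trans h5.symm)) (gkn_csymm (P12.2.2.2 (gkn_ne10 h1 h2))) (P25.2.2.2 (gkn_ne01 h2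 h5)) (gkn_csymm (P13.2.2.2 (gkn_ne10 h1 h3))) (P35.2.2.2 (gkn_ne01 h3 h5)) (gkn_csymm (P14.2.2.2 (gkn_ne10 h1 h4))) (P45.2.2.2 (gkn_ne01 h4 h5))
        ·
          rcases gkn_two hl5 with h5 | h5
          ·
            exact gkn_sub32 s2 s3 s5 s1 s4 i2 i3 i5 i1 i4 t2 t3 t5 t1 t4 hs2 hs3 hs5 hs1 hs4 ne23 ne25 ne12.symm ne24 ne35 ne13.symm ne34 ne15.symm ne45.symm ne14 (P23.1 (h2.trans h3.symm)) (P25.1 (h2.trans h5.symm)) (P35.1 (h3.trans h5.symm)) (P14.1 (h1.trans h4.symm)) (P23.2.1 (h2.trans h3.symm)) (P25.2.1 (h2.trans h5.symm)) (P35.2.1 (h3.trans h5.symm)) (P14.2.1 (h1.trans h4.symm)) (P23.2.2.1 (h2.trans h3.symm)) (P25.2.2.1 (h2.trans h5.symm)) (P35.2.2.1 (h3.trans h5.symm)) (P14.2.2.1 (h1.trans h4.symm)) (gkn_csymm (P12.2.2.2 (gkn_ne10 h1 h2))) (P24.2.2.2 (gkn_ne01 h2 h4)) (gkn_csymm (P13.2.2.2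 (gkn_ne10 h1 h3))) (P34.2.2.2 (gkn_ne01 h3 h4)) (gkn_csymm (P15.2.2.2 (gkn_ne10 h1 h5))) (gkn_csymm (P45.2.2.2 (gkn_ne10 h4 h5)))
          ·
            exact gkn_sub32 s1 s4 s5 s2 s3 i1 i4 i5 i2 i3 t1 t4 t5 t2 t3 hs1 hs4 hs5 hs2 hs3 ne14 ne15 ne12 ne13 ne45 ne24.symm ne34.symm ne25.symm ne35.symm ne23 (P14.1 (h1.trans h4.symm)) (P15.1 (h1.trans h5.symm)) (P45.1 (h4.trans h5.symm)) (P23.1 (h2.trans h3.symm)) (P14.2.1 (h1.trans h4.symm)) (P15.2.1 (h1.trans h5.symm)) (P45.2.1 (h4.trans h5.symm)) (P23.2.1 (h2.trans h3.symm)) (P14.2.2.1 (h1.trans h4.symm)) (P15.2.2.1 (h1.trans h5.symm)) (P45.2.2.1 (h4.trans h5.symm)) (P23.2.2.1 (h2.trans h3.symm)) (P12.2.2.2 (gkn_ne10 h1 h2)) (P13.2.2.2 (gkn_ne10 h1 h3)) (gkn_csymm (P24.2.2.2 (gkn_ne01 h2 h4))) (gkn_csymm (P34.2.2.2 (gkn_ne01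 h3 h4))) (gkn_csymm (P25.2.2.2 (gkn_ne01 h2 h5))) (gkn_csymm (P35.2.2.2 (gkn_ne01 h3 h5)))
      ·
        rcases gkn_two hl4 with h4 | h4
        ·
          rcases gkn_two hl5 with h5 | h5
          ·
            exact gkn_sub32 s2 s4 s5 s1 s3 i2 i4 i5 i1 i3 t2 t4 t5 t1 t3 hs2 hs4 hs5 hs1 hs3 ne24 ne25 ne12.symm ne23 ne45 ne14.symm ne34.symm ne15.symm ne35.symm ne13 (P24.1 (h2.trans h4.symm)) (P25.1 (h2.trans h5.symm)) (P45.1 (h4.trans h5.symm)) (P13.1 (h1.trans h3.symm)) (P24.2.1 (h2.trans h4.symm)) (P25.2.1 (h2.trans h5.symm)) (P45.2.1 (h4.trans h5.symm)) (P13.2.1 (h1.trans h3.symm)) (P24.2.2.1 (h2.trans h4.symm)) (P25.2.2.1 (h2.trans h5.symm)) (P45.2.2.1 (h4.trans h5.symm)) (P13.2.2.1 (h1.trans h3.symm)) (gkn_csymm (P12.2.2.2 (gkn_ne10 h1 h2))) (P23.2.2.2 (gkn_ne01 h2 h3)) (gkn_csymm (P14.2.2.2 (gkn_ne10 h1 h4)))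 (gkn_csymm (P34.2.2.2 (gkn_ne10 h3 h4))) (gkn_csymm (P15.2.2.2 (gkn_ne10 h1 h5))) (gkn_csymm (P35.2.2.2 (gkn_ne10 h3 h5)))
          ·
            exact gkn_sub32 s1 s3 s5 s2 s4 i1 i3 i5 i2 i4 t1 t3 t5 t2 t4 hs1 hs3 hs5 hs2 hs4 ne13 ne15 ne12 ne14 ne35 ne23.symm ne34 ne25.symm ne45.symm ne24 (P13.1 (h1.trans h3.symm)) (P15.1 (h1.trans h5.symm)) (P35.1 (h3.trans h5.symm)) (P24.1 (h2.trans h4.symm)) (P13.2.1 (h1.trans h3.symm)) (P15.2.1 (h1.trans h5.symm)) (P35.2.1 (h3.trans h5.symm)) (P24.2.1 (h2.trans h4.symm)) (P13.2.2.1 (h1.trans h3.symm)) (P15.2.2.1 (h1.trans h5.symm)) (P35.2.2.1 (h3.trans h5.symm)) (P24.2.2.1 (h2.trans h4.symm)) (P12.2.2.2 (gkn_ne10 h1 h2)) (P14.2.2.2 (gkn_ne10 h1 h4)) (gkn_csymm (P23.2.2.2 (gkn_ne01 h2 h3))) (P34.2.2.2 (gkn_ne10 h3 h4)) (gkn_csymm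 (P25.2.2.2 (gkn_ne01 h2 h5))) (gkn_csymm (P45.2.2.2 (gkn_ne01 h4 h5)))
        ·
          rcases gkn_two hl5 with h5 | h5
          ·
            exact gkn_sub32 s1 s3 s4 s2 s5 i1 i3 i4 i2 i5 t1 t3 t4 t2 t5 hs1 hs3 hs4 hs2 hs5 ne13 ne14 ne12 ne15 ne34 ne23.symm ne35 ne24.symm ne45 ne25 (P13.1 (h1.trans h3.symm)) (P14.1 (h1.trans h4.symm)) (P34.1 (h3.trans h4.symm)) (P25.1 (h2.trans h5.symm)) (P13.2.1 (h1.trans h3.symm)) (P14.2.1 (h1.trans h4.symm)) (P34.2.1 (h3.trans h4.symm)) (P25.2.1 (h2.trans h5.symm)) (P13.2.2.1 (h1.trans h3.symm)) (P14.2.2.1 (h1.trans h4.symm)) (P34.2.2.1 (h3.trans h4.symm)) (P25.2.2.1 (h2.trans h5.symm)) (P12.2.2.2 (gkn_ne10 h1 h2)) (P15.2.2.2 (gkn_ne10 h1 h5)) (gkn_csymm (P23.2.2.2 (gkn_ne01 h2 h3))) (P35.2.2.2 (gkn_ne10 h3 h5)) (gkn_csymm (P24.2.2.2 (gkn_ne01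 h2 h4))) (P45.2.2.2 (gkn_ne10 h4 h5))
          ·
            exact gkn_sub4 s1 s3 s4 s5 i1 i3 i4 i5 i2 t1 t3 t4 t5 t2 hs1 hs3 hs4 hs5 ne13 ne14 ne15 ne12 ne34 ne35 ne23.symm ne45 ne24.symm ne25.symm (P13.1 (h1.trans h3.symm)) (P14.1 (h1.trans h4.symm)) (P15.1 (h1.trans h5.symm)) (P34.1 (h3.trans h4.symm)) (P35.1 (h3.trans h5.symm)) (P45.1 (h4.trans h5.symm)) (P13.2.1 (h1.trans h3.symm)) (P14.2.1 (h1.trans h4.symm)) (P15.2.1 (h1.trans h5.symm)) (P34.2.1 (h3.trans h4.symm)) (P35.2.1 (h3.trans h5.symm)) (P45.2.1 (h4.trans h5.symm)) (P13.2.2.1 (h1.trans h3.symm)) (P14.2.2.1 (h1.trans h4.symm)) (P15.2.2.1 (h1.trans h5.symm)) (P34.2.2.1 (h3.trans h4.symm)) (P35.2.2.1 (h3.trans h5.symm)) (P45.2.2.1 (h4.trans h5.symm)) (P12.2.2.2 (gkn_ne10 h1 h2)) (gkn_csymm (P23.2.2.2 (gkn_ne01 h2 h3))) (gkn_csymm (P24.2.2.2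 (gkn_ne01 h2 h4))) (gkn_csymm (P25.2.2.2 (gkn_ne01 h2 h5)))
    ·
      rcases gkn_two hl3 with h3 | h3
      ·
        rcases gkn_two hl4 with h4 | h4
        ·
          rcases gkn_two hl5 with h5 | h5
          ·
            exact gkn_sub32 s3 s4 s5 s1 s2 i3 i4 i5 i1 i2 t3 t4 t5 t1 t2 hs3 hs4 hs5 hs1 hs2 ne34 ne35 ne13.symm ne23.symm ne45 ne14.symm ne24.symm ne15.symm ne25.symm ne12 (P34.1 (h3.trans h4.symm)) (P35.1 (h3.trans h5.symm)) (P45.1 (h4.trans h5.symm)) (P12.1 (h1.trans h2.symm)) (P34.2.1 (h3.trans h4.symm)) (P35.2.1 (h3.trans h5.symm)) (P45.2.1 (h4.trans h5.symm)) (P12.2.1 (h1.trans h2.symm)) (P34.2.2.1 (h3.trans h4.symm)) (P35.2.2.1 (h3.trans h5.symm)) (P45.2.2.1 (h4.trans h5.symm)) (P12.2.2.1 (h1.trans h2.symm)) (gkn_csymm (P13.2.2.2 (gkn_ne10 h1 h3))) (gkn_csymm (P23.2.2.2 (gkn_ne10 h2 h3))) (gkn_csymm (P14.2.2.2 (gkn_ne10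 h1 h4))) (gkn_csymm (P24.2.2.2 (gkn_ne10 h2 h4))) (gkn_csymm (P15.2.2.2 (gkn_ne10 h1 h5))) (gkn_csymm (P25.2.2.2 (gkn_ne10 h2 h5)))
          ·
            exact gkn_sub32 s1 s2 s5 s3 s4 i1 i2 i5 i3 i4 t1 t2 t5 t3 t4 hs1 hs2 hs5 hs3 hs4 ne12 ne15 ne13 ne14 ne25 ne23 ne24 ne35.symm ne45.symm ne34 (P12.1 (h1.trans h2.symm)) (P15.1 (h1.trans h5.symm)) (P25.1 (h2.trans h5.symm)) (P34.1 (h3.trans h4.symm)) (P12.2.1 (h1.trans h2.symm)) (P15.2.1 (h1.trans h5.symm)) (P25.2.1 (h2.trans h5.symm)) (P34.2.1 (h3.trans h4.symm)) (P12.2.2.1 (h1.trans h2.symm)) (P15.2.2.1 (h1.trans h5.symm)) (P25.2.2.1 (h2.trans h5.symm)) (P34.2.2.1 (h3.trans h4.symm)) (P13.2.2.2 (gkn_ne10 h1 h3)) (P14.2.2.2 (gkn_ne10 h1 h4)) (P23.2.2.2 (gkn_ne10 h2 h3)) (P24.2.2.2 (gkn_ne10 h2 h4)) (gkn_csymm (P35.2.2.2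 (gkn_ne01 h3 h5))) (gkn_csymm (P45.2.2.2 (gkn_ne01 h4 h5)))
        ·
          rcases gkn_two hl5 with h5 | h5
          ·
            exact gkn_sub32 s1 s2 s4 s3 s5 i1 i2 i4 i3 i5 t1 t2 t4 t3 t5 hs1 hs2 hs4 hs3 hs5 ne12 ne14 ne13 ne15 ne24 ne23 ne25 ne34.symm ne45 ne35 (P12.1 (h1.trans h2.symm)) (P14.1 (h1.trans h4.symm)) (P24.1 (h2.trans h4.symm)) (P35.1 (h3.trans h5.symm)) (P12.2.1 (h1.trans h2.symm)) (P14.2.1 (h1.trans h4.symm)) (P24.2.1 (h2.trans h4.symm)) (P35.2.1 (h3.trans h5.symm)) (P12.2.2.1 (h1.trans h2.symm)) (P14.2.2.1 (h1.trans h4.symm)) (P24.2.2.1 (h2.trans h4.symm)) (P35.2.2.1 (h3.trans h5.symm)) (P13.2.2.2 (gkn_ne10 h1 h3)) (P15.2.2.2 (gkn_ne10 h1 h5)) (P23.2.2.2 (gkn_ne10 h2 h3)) (P25.2.2.2 (gkn_ne10 h2 h5)) (gkn_csymm (P34.2.2.2 (gkn_ne01 h3 h4))) (P45.2.2.2 (gkn_ne10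 h4 h5))
          ·
            exact gkn_sub4 s1 s2 s4 s5 i1 i2 i4 i5 i3 t1 t2 t4 t5 t3 hs1 hs2 hs4 hs5 ne12 ne14 ne15 ne13 ne24 ne25 ne23 ne45 ne34.symm ne35.symm (P12.1 (h1.trans h2.symm)) (P14.1 (h1.trans h4.symm)) (P15.1 (h1.trans h5.symm)) (P24.1 (h2.trans h4.symm)) (P25.1 (h2.trans h5.symm)) (P45.1 (h4.trans h5.symm)) (P12.2.1 (h1.trans h2.symm)) (P14.2.1 (h1.trans h4.symm)) (P15.2.1 (h1.trans h5.symm)) (P24.2.1 (h2.trans h4.symm)) (P25.2.1 (h2.trans h5.symm)) (P45.2.1 (h4.trans h5.symm)) (P12.2.2.1 (h1.trans h2.symm)) (P14.2.2.1 (h1.trans h4.symm)) (P15.2.2.1 (h1.trans h5.symm)) (P24.2.2.1 (h2.trans h4.symm)) (P25.2.2.1 (h2.trans h5.symm)) (P45.2.2.1 (h4.trans h5.symm)) (P13.2.2.2 (gkn_ne10 h1 h3)) (P23.2.2.2 (gkn_ne10 h2 h3)) (gkn_csymm (P34.2.2.2 (gkn_ne01 h3 h4))) (gkn_csymm (P35.2.2.2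 (gkn_ne01 h3 h5)))
      ·
        rcases gkn_two hl4 with h4 | h4
        ·
          rcases gkn_two hl5 with h5 | h5
          ·
            exact gkn_sub32 s1 s2 s3 s4 s5 i1 i2 i3 i4 i5 t1 t2 t3 t4 t5 hs1 hs2 hs3 hs4 hs5 ne12 ne13 ne14 ne15 ne23 ne24 ne25 ne34 ne35 ne45 (P12.1 (h1.trans h2.symm)) (P13.1 (h1.trans h3.symm)) (P23.1 (h2.trans h3.symm)) (P45.1 (h4.trans h5.symm)) (P12.2.1 (h1.trans h2.symm)) (P13.2.1 (h1.trans h3.symm)) (P23.2.1 (h2.trans h3.symm)) (P45.2.1 (h4.trans h5.symm)) (P12.2.2.1 (h1.trans h2.symm)) (P13.2.2.1 (h1.trans h3.symm)) (P23.2.2.1 (h2.trans h3.symm)) (P45.2.2.1 (h4.trans h5.symm)) (P14.2.2.2 (gkn_ne10 h1 h4)) (P15.2.2.2 (gkn_ne10 h1 h5)) (P24.2.2.2 (gkn_ne10 h2 h4)) (P25.2.2.2 (gkn_ne10 h2 h5)) (P34.2.2.2 (gkn_ne10 h3 h4)) (P35.2.2.2 (gkn_ne10 h3 h5))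
          ·
            exact gkn_sub4 s1 s2 s3 s5 i1 i2 i3 i5 i4 t1 t2 t3 t5 t4 hs1 hs2 hs3 hs5 ne12 ne13 ne15 ne14 ne23 ne25 ne24 ne35 ne34 ne45.symm (P12.1 (h1.trans h2.symm)) (P13.1 (h1.trans h3.symm)) (P15.1 (h1.trans h5.symm)) (P23.1 (h2.trans h3.symm)) (P25.1 (h2.trans h5.symm)) (P35.1 (h3.trans h5.symm)) (P12.2.1 (h1.trans h2.symm)) (P13.2.1 (h1.trans h3.symm)) (P15.2.1 (h1.trans h5.symm)) (P23.2.1 (h2.trans h3.symm)) (P25.2.1 (h2.trans h5.symm)) (P35.2.1 (h3.trans h5.symm)) (P12.2.2.1 (h1.trans h2.symm)) (P13.2.2.1 (h1.trans h3.symm)) (P15.2.2.1 (h1.trans h5.symm)) (P23.2.2.1 (h2.trans h3.symm)) (P25.2.2.1 (h2.trans h5.symm)) (P35.2.2.1 (h3.trans h5.symm)) (P14.2.2.2 (gkn_ne10 h1 h4)) (P24.2.2.2 (gkn_ne10 h2 h4)) (P34.2.2.2 (gkn_ne10 h3 h4)) (gkn_csymm (P45.2.2.2 (gkn_ne01 h4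 h5)))
        ·
          rcases gkn_two hl5 with h5 | h5
          ·
            exact gkn_sub4 s1 s2 s3 s4 i1 i2 i3 i4 i5 t1 t2 t3 t4 t5 hs1 hs2 hs3 hs4 ne12 ne13 ne14 ne15 ne23 ne24 ne25 ne34 ne35 ne45 (P12.1 (h1.trans h2.symm)) (P13.1 (h1.trans h3.symm)) (P14.1 (h1.trans h4.symm)) (P23.1 (h2.trans h3.symm)) (P24.1 (h2.trans h4.symm)) (P34.1 (h3.trans h4.symm)) (P12.2.1 (h1.trans h2.symm)) (P13.2.1 (h1.trans h3.symm)) (P14.2.1 (h1.trans h4.symm)) (P23.2.1 (h2.trans h3.symm)) (P24.2.1 (h2.trans h4.symm)) (P34.2.1 (h3.trans h4.symm)) (P12.2.2.1 (h1.trans h2.symm)) (P13.2.2.1 (h1.trans h3.symm)) (P14.2.2.1 (h1.trans h4.symm)) (P23.2.2.1 (h2.trans h3.symm)) (P24.2.2.1 (h2.trans h4.symm)) (P34.2.2.1 (h3.trans h4.symm)) (P15.2.2.2 (gkn_ne10 h1 h5)) (P25.2.2.2 (gkn_ne10 h2 h5)) (P35.2.2.2 (gkn_ne10 h3 h5)) (P45.2.2.2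 (gkn_ne10 h4 h5))
          ·
            exact gkn_sub5 s1 s2 s3 s4 s5 t1 t2 t3 t4 t5 hs1 hs2 hs3 hs4 hs5 ne12 ne13 ne14 ne15 ne23 ne24 ne25 ne34 ne35 ne45 (P12.2.1 (h1.trans h2.symm)) (P13.2.1 (h1.trans h3.symm)) (P14.2.1 (h1.trans h4.symm)) (P15.2.1 (h1.trans h5.symm)) (P23.2.1 (h2.trans h3.symm)) (P24.2.1 (h2.trans h4.symm)) (P25.2.1 (h2.trans h5.symm)) (P34.2.1 (h3.trans h4.symm)) (P35.2.1 (h3.trans h5.symm)) (P45.2.1 (h4.trans h5.symm))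

private lemma gkn_relFT (k n : ℕ) (A B : Set (Sym2 (Fin n))) (l : Fin (2*k)) (i : Fin n) :
    gknRel k n A B (Sum.inl (false, l, i)) (Sum.inl (true, l, i)) := by
  by_cases h0 : (l : ℕ) = 0
  · exact Or.inr (Or.inl ⟨rfl, rfl, h0, h0, Or.inl rfl⟩)
  · by_cases h1 : (l : ℕ) = 2*k-1
    · exact Or.inr (Or.inr (Or.inl ⟨rfl, rfl, h1, h1, Or.inl rfl⟩))
    · have hlt := l.isLt
      exact Or.inr (Or.inr (Or.inr (Or.inl ⟨by simp, rfl, by omega, by omega, rfl⟩)))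

private lemma gkn_adj_clique {k n : ℕ} {A B : Set (Sym2 (Fin n))} {b : Bool}
    {l : Fin (2*k)} {i j : Fin n} (hij : i ≠ j) :
    (Gkn k n A B).Adj (Sum.inl (b, l, i)) (Sum.inl (b, l, j)) := by
  rw [Gkn, SimpleGraph.fromRel_adj]
  exact ⟨fun h => hij (congrArg (fun x => x.2.2) (Sum.inl.inj h)),
    Or.inl (Or.inl ⟨rfl, rfl, hij⟩)⟩

private lemma gkn_adj_match {k n : ℕ} {A B : Set (Sym2 (Fin n))} {b b' : Bool}
    {l : Fin (2*k)} {i : Fin n} (hbb : b ≠ b') :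
    (Gkn k n A B).Adj (Sum.inl (b, l, i)) (Sum.inl (b', l, i)) := by
  rw [Gkn, SimpleGraph.fromRel_adj]
  refine ⟨fun h => hbb (congrArg (fun x => x.1) (Sum.inl.inj h)), ?_⟩
  cases b <;> cases b'
  · exact absurd rfl hbb
  · exact Or.inl (gkn_relFT k n A B l i)
  · exact Or.inr (gkn_relFT k n A B l i)
  · exact absurd rfl hbb

private lemma gkn_adj_anti {k n : ℕ} {A B : Set (Sym2 (Fin n))} {b b' : Bool}
    {l l' : Fin (2*k)} {i j : Fin n} (hl : (l' : ℕ) = (l : ℕ) + 1) (hij : i ≠ j) :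
    (Gkn k n A B).Adj (Sum.inl (b, l, i)) (Sum.inl (b', l', j)) := by
  rw [Gkn, SimpleGraph.fromRel_adj]
  refine ⟨fun h => ?_, Or.inl (Or.inr (Or.inr (Or.inr (Or.inr ⟨hl, hij⟩))))⟩
  have : l = l' := congrArg (fun x => x.2.1) (Sum.inl.inj h)
  rw [this] at hl
  omega

private lemma gkn_adj_v0 {k n : ℕ} {A B : Set (Sym2 (Fin n))} {x : GknVert k n}
    (h : (Gkn k n A B).Adj x (Sum.inr 0)) :
    ∃ l i, x = Sum.inl (false, l, i) ∧ (l : ℕ) = 0 := by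
  rw [Gkn, SimpleGraph.fromRel_adj] at h
  rcases x with ⟨b, l, i⟩ | s
  · obtain ⟨-, h | h⟩ := h
    · rcases h with ⟨-, hb, hl⟩ | ⟨h01, -⟩ | ⟨h02, -⟩
      · exact ⟨l, i, by rw [hb], hl⟩
      · exact absurd h01 (by decide)
      · exact absurd h02 (by decide)
    · exact h.elim
  · obtain ⟨-, h | h⟩ := h <;> exact h.elim

private lemma gkn_adj_v1 {k n : ℕ} {A B : Set (Sym2 (Fin n))} {x : GknVert k n}
    (h : (Gkn k n A B).Adj x (Sum.inr 1)) :
    ∃ l i, x = Sum.inl (true, l, i) ∧ (l : ℕ) = 0 := by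
  rw [Gkn, SimpleGraph.fromRel_adj] at h
  rcases x with ⟨b, l, i⟩ | s
  · obtain ⟨-, h | h⟩ := h
    · rcases h with ⟨h10, -⟩ | ⟨-, hb, hl⟩ | ⟨h12, -⟩
      · exact absurd h10 (by decide)
      · exact ⟨l, i, by rw [hb], hl⟩
      · exact absurd h12 (by decide)
    · exact h.elim
  · obtain ⟨-, h | h⟩ := h <;> exact h.elim

/-- level classification -/
private def gknCls (k n : ℕ) : GknVert k n → ℕ
  | Sum.inl (_, l, _) => (l : ℕ)/2 + 1
  | Sum.inr s => if (s : ℕ) = 2 then k+1 else 0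

private lemma gknCls_lt (k n : ℕ) (v : GknVert k n) : gknCls k n v < k + 2 := by
  rcases v with ⟨b, l, i⟩ | s
  · have := l.isLt
    simp only [gknCls]
    omega
  · simp only [gknCls]
    split <;> omega

private lemma gknCls_eq_zero {k n : ℕ} {v : GknVert k n} (h : gknCls k n v = 0) :
    v = Sum.inr 0 ∨ v = Sum.inr 1 := by
  rcases v with ⟨b, l, i⟩ | s
  · exact absurd h (by simp [gknCls])
  · fin_cases s
    · exact Or.inl rfl
    · exact Or.inr rfl
    · exact absurd h (by simp [gknCls])

private lemma gknCls_eq_top {k n : ℕ} {v : GknVert k n} (h : gknCls k n v = k+1) :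
    v = Sum.inr 2 := by
  rcases v with ⟨b, l, i⟩ | s
  · exfalso
    have := l.isLt
    simp only [gknCls] at h
    omega
  · fin_cases s
    · exact absurd h (by simp [gknCls])
    · exact absurd h (by simp [gknCls])
    · rfl

private lemma gknCls_mid {k n : ℕ} {v : GknVert k n} {j : ℕ} (h : gknCls k n v = j)
    (h1 : 1 ≤ j) (h2 : j ≤ k) :
    ∃ b l i, v = Sum.inl (b, l, i) ∧ (l : ℕ)/2 + 1 = j := by
  rcases v with ⟨b, l, i⟩ | s
  · exact ⟨b, l, i, rfl, by simpa [gknCls] using h⟩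
  · exfalso
    fin_cases s <;> simp [gknCls] at h <;> omega

private lemma gkn_ex5 {α : Type*} [DecidableEq α] {S : Finset α} (h : 5 ≤ S.card) :
    ∃ a b c d e, a ∈ S ∧ b ∈ S ∧ c ∈ S ∧ d ∈ S ∧ e ∈ S ∧
      a ≠ b ∧ a ≠ c ∧ a ≠ d ∧ a ≠ e ∧ b ≠ c ∧ b ≠ d ∧ b ≠ e ∧ c ≠ d ∧ c ≠ e ∧ d ≠ e := by
  obtain ⟨a, ha⟩ := Finset.card_pos.mp (show 0 < S.card by omega)
  have h1 : 4 ≤ (S.erase a).card := by rw [Finset.card_erase_of_mem ha]; omega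
  obtain ⟨b, hb⟩ := Finset.card_pos.mp (show 0 < (S.erase a).card by omega)
  have h2 : 3 ≤ ((S.erase a).erase b).card := by rw [Finset.card_erase_of_mem hb]; omega
  obtain ⟨c, hc⟩ := Finset.card_pos.mp (show 0 < ((S.erase a).erase b).card by omega)
  have h3 : 2 ≤ (((S.erase a).erase b).erase c).card := by rw [Finset.card_erase_of_mem hc]; omega
  obtain ⟨d, hd⟩ := Finset.card_pos.mp (show 0 < (((S.erase a).erase b).erase c).card by omega)
  have h4 : 1 ≤ ((((S.erase a).erase b).erase c).erase d).card := by
    rw [Finset.card_erase_of_mem hd]; omega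
  obtain ⟨e, he⟩ := Finset.card_pos.mp (show 0 < ((((S.erase a).erase b).erase c).erase d).card by omega)
  obtain ⟨hed, he⟩ := Finset.mem_erase.mp he
  obtain ⟨hec, he⟩ := Finset.mem_erase.mp he
  obtain ⟨heb, he⟩ := Finset.mem_erase.mp he
  obtain ⟨hea, he⟩ := Finset.mem_erase.mp he
  obtain ⟨hdc, hd⟩ := Finset.mem_erase.mp hd
  obtain ⟨hdb, hd⟩ := Finset.mem_erase.mp hd
  obtain ⟨hda, hd⟩ := Finset.mem_erase.mp hd
  obtain ⟨hcb, hc⟩ := Finset.mem_erase.mp hc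
  obtain ⟨hca, hc⟩ := Finset.mem_erase.mp hc
  obtain ⟨hba, hb⟩ := Finset.mem_erase.mp hb
  exact ⟨a, b, c, d, e, ha, hb, hc, hd, he, hba.symm, hca.symm, hda.symm, hea.symm,
    hcb.symm, hdb.symm, heb.symm, hdc.symm, hec.symm, hed.symm⟩

/-- every induced path on `4k+3` vertices in `G_{k,n}(A,B)` (given as a
graph embedding `f` of the path graph) contains `v₀`, `v₁` and `w`, contains exactly `4k`
vertices belonging to the cliques, and has `v₀` and `v₁` as its two endpoints. -/
theorem gkn_inducedPath_structure
    (k n : ℕ) (hk : 1 ≤ k) (hn : 1 ≤ n)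
    (A B : Set (Sym2 (Fin n)))
    (hA : ∀ e ∈ A, ¬ e.IsDiag) (hB : ∀ e ∈ B, ¬ e.IsDiag)
    (f : SimpleGraph.pathGraph (4 * k + 3) ↪g Gkn k n A B) :
    (Sum.inr 0 ∈ Set.range ⇑f ∧ Sum.inr 1 ∈ Set.range ⇑f ∧ Sum.inr 2 ∈ Set.range ⇑f) ∧
    {v ∈ Set.range ⇑f | ∃ x, v = Sum.inl x}.ncard = 4 * k ∧
    ({f ⟨0, by omega⟩, f ⟨4 * k + 2, by omega⟩} : Set (GknVert k n)) =
      {Sum.inr 0, Sum.inr 1} := by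
  classical
  have hInj : Function.Injective ⇑f := f.injective
  have hadj : ∀ {p q : Fin (4*k+3)},
      (Gkn k n A B).Adj (f p) (f q) ↔ (SimpleGraph.pathGraph (4*k+3)).Adj p q :=
    fun {p q} => f.map_adj_iff
  have hDd : ∀ {p q : Fin (4*k+3)}, (Gkn k n A B).Adj (f p) (f q) →
      ((p : ℕ) + 1 = (q : ℕ) ∨ (q : ℕ) + 1 = (p : ℕ)) :=
    fun {p q} h => SimpleGraph.pathGraph_adj.mp (hadj.mp h)
  -- the pair facts needed by gkn_key5
  have pairF : ∀ (p q : Fin (4*k+3)) (b1 b2 : Bool) (l1 l2 : Fin (2*k)) (i1 i2 : Fin n),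
      p ≠ q → f p = Sum.inl (b1, l1, i1) → f q = Sum.inl (b2, l2, i2) →
      (l1 : ℕ)/2 = (l2 : ℕ)/2 →
      (((l1:ℕ)%2 = (l2:ℕ)%2 → (cond b1 1 0 : ℕ) = cond b2 1 0 → (i1:ℕ) ≠ (i2:ℕ)) ∧
       ((l1:ℕ)%2 = (l2:ℕ)%2 → (cond b1 1 0 : ℕ) = cond b2 1 0 →
         ((p:ℕ) + 1 = (q:ℕ) ∨ (q:ℕ) + 1 = (p:ℕ))) ∧
       ((l1:ℕ)%2 = (l2:ℕ)%2 → (i1:ℕ) = (i2:ℕ) →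
         ((p:ℕ) + 1 = (q:ℕ) ∨ (q:ℕ) + 1 = (p:ℕ))) ∧
       ((l1:ℕ)%2 ≠ (l2:ℕ)%2 →
         ((i1:ℕ) = (i2:ℕ) ∨ ((p:ℕ) + 1 = (q:ℕ) ∨ (q:ℕ) + 1 = (p:ℕ))))) := by
    intro p q b1 b2 l1 l2 i1 i2 hpq h1 h2 hdiv
    have hfe : f p ≠ f q := fun h => hpq (hInj h)
    have hbof : ∀ (_ : (cond b1 1 0 : ℕ) = cond b2 1 0), b1 = b2 := by
      cases b1 <;> cases b2 <;> simp
    have hll : ∀ (_ : (l1:ℕ)%2 = (l2:ℕ)%2), l1 = l2 := fun hm => Fin.ext (by omega)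
    refine ⟨?_, ?_, ?_, ?_⟩
    · intro hm hc hi
      exact hfe (by rw [h1, h2, hbof hc, hll hm, Fin.ext hi])
    · intro hm hc
      have hii : i1 ≠ i2 := fun hi => hfe (by rw [h1, h2, hbof hc, hll hm, hi])
      have h2' : f q = Sum.inl (b1, l1, i2) := by rw [h2, hbof hc, hll hm]
      have : (Gkn k n A B).Adj (f p) (f q) := by
        rw [h1, h2']; exact gkn_adj_clique hii
      exact hDd this
    · intro hm hi
      by_cases hbb : b1 = b2
      · exact absurd (by rw [h1, h2, hbb, hll hm, Fin.ext hi]) hfe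
      · have h2' : f q = Sum.inl (b2, l1, i1) := by rw [h2, hll hm, Fin.ext hi]
        have : (Gkn k n A B).Adj (f p) (f q) := by
          rw [h1, h2']; exact gkn_adj_match hbb
        exact hDd this
    · intro hm
      by_cases hii : (i1:ℕ) = (i2:ℕ)
      · exact Or.inl hii
      · right
        have hne : i1 ≠ i2 := fun h => hii (congrArg Fin.val h)
        have hlv : (l2:ℕ) = (l1:ℕ) + 1 ∨ (l1:ℕ) = (l2:ℕ) + 1 := by omega
        rcases hlv with h' | h'
        · have : (Gkn k n A B).Adj (f p) (f q) := by
            rw [h1, h2]; exact gkn_adj_anti h' hne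
          exact hDd this
        · have : (Gkn k n A B).Adj (f q) (f p) := by
            rw [h1, h2]; exact gkn_adj_anti h' hne.symm
          exact (hDd this).symm
  -- fibers of the classification
  set Fb : ℕ → Finset (Fin (4*k+3)) :=
    fun j => Finset.univ.filter (fun t => gknCls k n (f t) = j) with hFb
  have hsum : ∑ j ∈ Finset.range (k+2), (Fb j).card = 4*k+3 := by
    have := Finset.card_eq_sum_card_fiberwise
      (f := fun t : Fin (4*k+3) => gknCls k n (f t)) (s := Finset.univ)
      (t := Finset.range (k+2)) (fun x _ => Finset.mem_range.mpr (gknCls_lt k n (f x)))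
    rw [Finset.card_univ, Fintype.card_fin] at this
    exact this.symm
  have hb0 : (Fb 0).card ≤ 2 := by
    have hsub : (Fb 0).image f ⊆ {Sum.inr 0, Sum.inr 1} := by
      intro v hv
      obtain ⟨t, ht, rfl⟩ := Finset.mem_image.mp hv
      have := (Finset.mem_filter.mp ht).2
      rcases gknCls_eq_zero this with h | h <;> rw [h] <;> simp
    calc (Fb 0).card = ((Fb 0).image f).card :=
          (Finset.card_image_of_injOn hInj.injOn).symm
      _ ≤ ({Sum.inr 0, Sum.inr 1} : Finset (GknVert k n)).card := Finset.card_le_card hsub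
      _ ≤ 2 := (Finset.card_insert_le _ _).trans (by simp)
  have htop : (Fb (k+1)).card ≤ 1 := by
    have hsub : (Fb (k+1)).image f ⊆ {Sum.inr 2} := by
      intro v hv
      obtain ⟨t, ht, rfl⟩ := Finset.mem_image.mp hv
      have := (Finset.mem_filter.mp ht).2
      rw [gknCls_eq_top this]; simp
    calc (Fb (k+1)).card = ((Fb (k+1)).image f).card :=
          (Finset.card_image_of_injOn hInj.injOn).symm
      _ ≤ ({Sum.inr 2} : Finset (GknVert k n)).card := Finset.card_le_card hsub
      _ ≤ 1 := by simp
  have hmid : ∀ j, 1 ≤ j → j ≤ k → (Fb j).card ≤ 4 := by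
    intro j hj1 hj2
    by_contra hcon
    obtain ⟨p1, p2, p3, p4, p5, hm1, hm2, hm3, hm4, hm5, q12, q13, q14, q15, q23,
      q24, q25, q34, q35, q45⟩ := gkn_ex5 (S := Fb j) (by omega)
    obtain ⟨b1, l1, i1, hf1, hl1⟩ :=
      gknCls_mid (Finset.mem_filter.mp hm1).2 hj1 hj2
    obtain ⟨b2, l2, i2, hf2, hl2⟩ :=
      gknCls_mid (Finset.mem_filter.mp hm2).2 hj1 hj2
    obtain ⟨b3, l3, i3, hf3, hl3⟩ :=
      gknCls_mid (Finset.mem_filter.mp hm3).2 hj1 hj2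
    obtain ⟨b4, l4, i4, hf4, hl4⟩ :=
      gknCls_mid (Finset.mem_filter.mp hm4).2 hj1 hj2
    obtain ⟨b5, l5, i5, hf5, hl5⟩ :=
      gknCls_mid (Finset.mem_filter.mp hm5).2 hj1 hj2
    have hvne : ∀ {a b : Fin (4*k+3)}, a ≠ b → (a:ℕ) ≠ (b:ℕ) :=
      fun {a b} h hv => h (Fin.ext hv)
    exact gkn_key5 ((l1:ℕ)%2) ((l2:ℕ)%2) ((l3:ℕ)%2) ((l4:ℕ)%2) ((l5:ℕ)%2)
      (cond b1 1 0) (cond b2 1 0) (cond b3 1 0) (cond b4 1 0) (cond b5 1 0)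
      (i1:ℕ) (i2:ℕ) (i3:ℕ) (i4:ℕ) (i5:ℕ)
      (p1:ℕ) (p2:ℕ) (p3:ℕ) (p4:ℕ) (p5:ℕ)
      (Nat.mod_lt _ (by omega)) (Nat.mod_lt _ (by omega)) (Nat.mod_lt _ (by omega))
      (Nat.mod_lt _ (by omega)) (Nat.mod_lt _ (by omega))
      (by cases b1 <;> simp) (by cases b2 <;> simp) (by cases b3 <;> simp)
      (by cases b4 <;> simp) (by cases b5 <;> simp)
      (hvne q12) (hvne q13) (hvne q14) (hvne q15) (hvne q23) (hvne q24) (hvne q25)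
      (hvne q34) (hvne q35) (hvne q45)
      (pairF p1 p2 b1 b2 l1 l2 i1 i2 q12 hf1 hf2 (by omega))
      (pairF p1 p3 b1 b3 l1 l3 i1 i3 q13 hf1 hf3 (by omega))
      (pairF p1 p4 b1 b4 l1 l4 i1 i4 q14 hf1 hf4 (by omega))
      (pairF p1 p5 b1 b5 l1 l5 i1 i5 q15 hf1 hf5 (by omega))
      (pairF p2 p3 b2 b3 l2 l3 i2 i3 q23 hf2 hf3 (by omega))
      (pairF p2 p4 b2 b4 l2 l4 i2 i4 q24 hf2 hf4 (by omega))
      (pairF p2 p5 b2 b5 l2 l5 i2 i5 q25 hf2 hf5 (by omega))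
      (pairF p3 p4 b3 b4 l3 l4 i3 i4 q34 hf3 hf4 (by omega))
      (pairF p3 p5 b3 b5 l3 l5 i3 i5 q35 hf3 hf5 (by omega))
      (pairF p4 p5 b4 b5 l4 l5 i4 i5 q45 hf4 hf5 (by omega))
  -- the bound function
  have hBsum : ∑ j ∈ Finset.range (k+2),
      (if j = 0 then 2 else if j = k+1 then 1 else 4) = 4*k+3 := by
    rw [Finset.sum_range_succ, Finset.sum_range_succ']
    have hmid4 : ∀ x ∈ Finset.range k,
        (if x+1 = 0 then 2 else if x+1 = k+1 then 1 else (4:ℕ)) = 4 := by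
      intro x hx
      have := Finset.mem_range.mp hx
      rw [if_neg (by omega), if_neg (by omega)]
    rw [Finset.sum_congr rfl hmid4, Finset.sum_const, Finset.card_range]
    have h1 : (if (0:ℕ) = 0 then (2:ℕ) else if 0 = k+1 then 1 else 4) = 2 := if_pos rfl
    have h2 : (if k+1 = 0 then (2:ℕ) else if k+1 = k+1 then 1 else 4) = 1 := by
      rw [if_neg (by omega), if_pos rfl]
    rw [h1, h2, smul_eq_mul]
    omega
  have hle : ∀ j ∈ Finset.range (k+2),
      (Fb j).card ≤ (if j = 0 then 2 else if j = k+1 then 1 else 4) := by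
    intro j hj
    have hjr := Finset.mem_range.mp hj
    split_ifs with h1 h2
    · exact h1 ▸ hb0
    · exact h2 ▸ htop
    · exact hmid j (by omega) (by omega)
  have hnotlt : ∀ j0 ∈ Finset.range (k+2),
      ¬ ((Fb j0).card < (if j0 = 0 then 2 else if j0 = k+1 then 1 else 4)) := by
    intro j0 hj0 hlt
    have := Finset.sum_lt_sum hle ⟨j0, hj0, hlt⟩
    rw [hsum, hBsum] at this
    omega
  have h0eq : (Fb 0).card = 2 := by
    have h := hnotlt 0 (Finset.mem_range.mpr (by omega))
    rw [if_pos rfl] at h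
    omega
  have htopeq : (Fb (k+1)).card = 1 := by
    have h := hnotlt (k+1) (Finset.mem_range.mpr (by omega))
    rw [if_neg (show ¬ (k+1=0) by omega), if_pos rfl] at h
    omega
  -- the three special vertices are in the range
  have himg0 : (Fb 0).image f = ({Sum.inr 0, Sum.inr 1} : Finset (GknVert k n)) := by
    apply Finset.eq_of_subset_of_card_le
    · intro v hv
      obtain ⟨t, ht, rfl⟩ := Finset.mem_image.mp hv
      have := (Finset.mem_filter.mp ht).2
      rcases gknCls_eq_zero this with h | h <;> rw [h] <;> simp
    · rw [Finset.card_image_of_injOn hInj.injOn, h0eq]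
      exact (Finset.card_insert_le _ _).trans (by simp)
  have mem0 : (Sum.inr 0 : GknVert k n) ∈ Set.range ⇑f := by
    have : (Sum.inr 0 : GknVert k n) ∈ (Fb 0).image f := by rw [himg0]; simp
    obtain ⟨t, -, ht⟩ := Finset.mem_image.mp this
    exact ⟨t, ht⟩
  have mem1 : (Sum.inr 1 : GknVert k n) ∈ Set.range ⇑f := by
    have : (Sum.inr 1 : GknVert k n) ∈ (Fb 0).image f := by rw [himg0]; simp
    obtain ⟨t, -, ht⟩ := Finset.mem_image.mp this
    exact ⟨t, ht⟩
  have mem2 : (Sum.inr 2 : GknVert k n) ∈ Set.range ⇑f := by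
    obtain ⟨t, ht⟩ := Finset.card_pos.mp (show 0 < (Fb (k+1)).card by omega)
    exact ⟨t, gknCls_eq_top (Finset.mem_filter.mp ht).2⟩
  -- the number of clique vertices
  have hncard : {v ∈ Set.range ⇑f | ∃ x, v = Sum.inl x}.ncard = 4 * k := by
    obtain ⟨u0, hu0⟩ := mem0
    obtain ⟨u1, hu1⟩ := mem1
    obtain ⟨u2, hu2⟩ := mem2
    set T : Finset (Fin (4*k+3)) :=
      Finset.univ.filter (fun t => ∃ x, f t = Sum.inl x) with hT
    have hu0T : u0 ∉ T := by
      intro h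
      obtain ⟨x, hx⟩ := (Finset.mem_filter.mp h).2
      exact Sum.inl_ne_inr (hx.symm.trans hu0)
    have hu1T : u1 ∉ T := by
      intro h
      obtain ⟨x, hx⟩ := (Finset.mem_filter.mp h).2
      exact Sum.inl_ne_inr (hx.symm.trans hu1)
    have hu2T : u2 ∉ T := by
      intro h
      obtain ⟨x, hx⟩ := (Finset.mem_filter.mp h).2
      exact Sum.inl_ne_inr (hx.symm.trans hu2)
    have h01 : u0 ≠ u1 := fun h => by rw [h, hu1] at hu0; simp at hu0
    have h02 : u0 ≠ u2 := fun h => by rw [h, hu2] at hu0; simp at hu0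
    have h12 : u1 ≠ u2 := fun h => by rw [h, hu2] at hu1; simp at hu1
    have huniv : (Finset.univ : Finset (Fin (4*k+3))) = insert u0 (insert u1 (insert u2 T)) := by
      apply Finset.Subset.antisymm
      · intro t _
        rcases hq : f t with x | s
        · exact Finset.mem_insert_of_mem (Finset.mem_insert_of_mem
            (Finset.mem_insert_of_mem (Finset.mem_filter.mpr ⟨Finset.mem_univ _, ⟨x, hq⟩⟩)))
        · fin_cases s
          · have : t = u0 := hInj (hq.trans hu0.symm)
            rw [this]; exact Finset.mem_insert_self _ _
          · have : t = u1 := hInj (hq.trans hu1.symm)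
            rw [this]
            exact Finset.mem_insert_of_mem (Finset.mem_insert_self _ _)
          · have : t = u2 := hInj (hq.trans hu2.symm)
            rw [this]
            exact Finset.mem_insert_of_mem (Finset.mem_insert_of_mem
              (Finset.mem_insert_self _ _))
      · intro t _
        exact Finset.mem_univ t
    have hTcard : T.card = 4*k := by
      have hc := congrArg Finset.card huniv
      rw [Finset.card_univ, Fintype.card_fin] at hc
      rw [Finset.card_insert_of_notMem (by simp [h01, h02, hu0T]),
        Finset.card_insert_of_notMem (by simp [h12, hu1T]),
        Finset.card_insert_of_notMem hu2T] at hc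
      omega
    have hseteq : {v ∈ Set.range ⇑f | ∃ x, v = Sum.inl x} = ↑(T.image f) := by
      ext v
      constructor
      · rintro ⟨⟨t, rfl⟩, x, hx⟩
        exact Finset.mem_coe.mpr (Finset.mem_image.mpr
          ⟨t, Finset.mem_filter.mpr ⟨Finset.mem_univ _, ⟨x, hx⟩⟩, rfl⟩)
      · intro hv
        obtain ⟨t, ht, rfl⟩ := Finset.mem_image.mp (Finset.mem_coe.mp hv)
        exact ⟨⟨t, rfl⟩, (Finset.mem_filter.mp ht).2⟩
    rw [hseteq, Set.ncard_coe_finset, Finset.card_image_of_injOn hInj.injOn, hTcard]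
  -- endpoints
  have hend : ∀ t : Fin (4*k+3), (f t = Sum.inr 0 ∨ f t = Sum.inr 1) →
      (t : ℕ) = 0 ∨ (t : ℕ) = 4*k+2 := by
    intro t hft
    by_contra hcon
    push_neg at hcon
    have htv := t.isLt
    have ha : (t:ℕ) - 1 < 4*k+3 := by omega
    have hb : (t:ℕ) + 1 < 4*k+3 := by omega
    set a : Fin (4*k+3) := ⟨(t:ℕ) - 1, ha⟩ with hadef
    set b : Fin (4*k+3) := ⟨(t:ℕ) + 1, hb⟩ with hbdef
    have hav : (a:ℕ) = (t:ℕ) - 1 := rfl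
    have hbv : (b:ℕ) = (t:ℕ) + 1 := rfl
    have hadja : (Gkn k n A B).Adj (f a) (f t) :=
      hadj.mpr (SimpleGraph.pathGraph_adj.mpr (Or.inl (by omega)))
    have hadjb : (Gkn k n A B).Adj (f t) (f b) :=
      hadj.mpr (SimpleGraph.pathGraph_adj.mpr (Or.inl (by omega)))
    have hab : a ≠ b := fun h => by
      have := congrArg Fin.val h
      omega
    rcases hft with h0 | h0
    · rw [h0] at hadja hadjb
      obtain ⟨la, ia, hfa, hla⟩ := gkn_adj_v0 hadja
      obtain ⟨lb, ib, hfb, hlb⟩ := gkn_adj_v0 hadjb.symm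
      have hll : la = lb := Fin.ext (by omega)
      have hne : ia ≠ ib := fun h => hab (hInj (by rw [hfa, hfb, hll, h]))
      have hcl : (Gkn k n A B).Adj (f a) (f b) := by
        rw [hfa, hfb, ← hll]
        exact gkn_adj_clique hne
      have := hDd hcl
      omega
    · rw [h0] at hadja hadjb
      obtain ⟨la, ia, hfa, hla⟩ := gkn_adj_v1 hadja
      obtain ⟨lb, ib, hfb, hlb⟩ := gkn_adj_v1 hadjb.symm
      have hll : la = lb := Fin.ext (by omega)
      have hne : ia ≠ ib := fun h => hab (hInj (by rw [hfa, hfb, hll, h]))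
      have hcl : (Gkn k n A B).Adj (f a) (f b) := by
        rw [hfa, hfb, ← hll]
        exact gkn_adj_clique hne
      have := hDd hcl
      omega
  obtain ⟨t0, ht0⟩ := mem0
  obtain ⟨t1, ht1⟩ := mem1
  have hne01 : t0 ≠ t1 := by
    intro h
    rw [h, ht1] at ht0
    simp at ht0
  have hpair : ({f ⟨0, by omega⟩, f ⟨4 * k + 2, by omega⟩} : Set (GknVert k n)) =
      {Sum.inr 0, Sum.inr 1} := by
    rcases hend t0 (Or.inl ht0) with h00 | h00 <;>
      rcases hend t1 (Or.inr ht1) with h10 | h10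
    · exact absurd (Fin.ext (h00.trans h10.symm)) hne01
    · have e0 : f ⟨0, by omega⟩ = Sum.inr 0 := by
        rw [show (⟨0, by omega⟩ : Fin (4*k+3)) = t0 from Fin.ext (by rw [h00]), ht0]
      have e1 : f ⟨4*k+2, by omega⟩ = Sum.inr 1 := by
        rw [show (⟨4*k+2, by omega⟩ : Fin (4*k+3)) = t1 from Fin.ext (by rw [h10]), ht1]
      rw [e0, e1]
    · have e0 : f ⟨0, by omega⟩ = Sum.inr 1 := by
        rw [show (⟨0, by omega⟩ : Fin (4*k+3)) = t1 from Fin.ext (by rw [h10]), ht1]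
      have e1 : f ⟨4*k+2, by omega⟩ = Sum.inr 0 := by
        rw [show (⟨4*k+2, by omega⟩ : Fin (4*k+3)) = t0 from Fin.ext (by rw [h00]), ht0]
      rw [e0, e1, Set.pair_comm]
    · exact absurd (Fin.ext (h00.trans h10.symm)) hne01
  exact ⟨⟨⟨t0, ht0⟩, ⟨t1, ht1⟩, mem2⟩, hncard, hpair⟩
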